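/- arXiv:2309.03163 — 5 statements merged into one kernel-verified Lean document; each statement's English description precedes it below -/
import Mathlib

section
/- For the MMA(1) process X_j = max(c_0 ξ_j, c_1 ξ_{j+1}) built from an i.i.d. nonnegative regularly varying sequence (ξ_j) with index α, one has lim_{x→∞} P(X_1 > x ∣ X_0 > x) = (min(c_0,c_1))^α / (c_0^α + c_1^α), where P(X_1 > x ∣ X_0 > x) = P(X_0 > x, X_1 > x)/P(X_0 > x). -/
/-!
Write `F̄ y = P(ξ₀ > y)`. Since `{X₀ > x} = {ξ₀ > x/c₀} ∪ {ξ₁ > x/c₁}`, independence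
gives `P(X₀ > x) = F̄(x/c₀) + F̄(x/c₁) - F̄(x/c₀) F̄(x/c₁) ∼ (c₀^α + c₁^α) F̄(x)`.
Both `X₀` and `X₁` exceed `x` when `ξ₁ > x / min c₀ c₁`, and otherwise only if two of
`ξ₀, ξ₁, ξ₂` exceed `x / max c₀ c₁`, which has probability
`O(F̄(x / max c₀ c₁)²) = o(F̄ x)`.
Hence `P(X₀ > x, X₁ > x) ∼ (min c₀ c₁)^α F̄(x)`.
-/

open MeasureTheory Filter ProbabilityTheory Topology

def IsRegularlyVarying (G : ℝ → ℝ) (ρ : ℝ) : Prop :=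
  ∀ t : ℝ, 0 < t → Tendsto (fun x => G (t * x) / G x) atTop (𝓝 (t ^ ρ))

namespace IsRegularlyVarying

variable {G : ℝ → ℝ} {ρ : ℝ}

theorem eventually_ne_zero (hG : IsRegularlyVarying G ρ) : ∀ᶠ x in atTop, G x ≠ 0 := by
  have h1 := hG 1 one_pos
  simp only [one_mul, Real.one_rpow] at h1
  filter_upwards [h1.eventually_ne one_ne_zero] with x hx h0
  simp [h0] at hx

theorem tendsto_comp_div (hG : IsRegularlyVarying G ρ) {c : ℝ} (hc : 0 < c) :
    Tendsto (fun x => G (x / c) / G x) atTop (𝓝 (c ^ (-ρ))) := by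
  have h := hG c⁻¹ (inv_pos.2 hc)
  rw [Real.inv_rpow hc.le, ← Real.rpow_neg hc.le] at h
  simpa only [inv_mul_eq_div] using h

/-- If `L = inf G` were positive, `G (2x) / G x` would tend to `L / L = 1 ≠ 2 ^ ρ`. -/
theorem tendsto_zero (hG : IsRegularlyVarying G ρ) (hρ : ρ < 0) (hanti : Antitone G)
    (hnonneg : ∀ x, 0 ≤ G x) : Tendsto G atTop (𝓝 0) := by
  have hinf := tendsto_atTop_ciInf hanti ⟨0, by rintro _ ⟨x, rfl⟩; exact hnonneg x⟩
  suffices h : ⨅ x, G x = 0 by rwa [h] at hinf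
  by_contra hne
  have hratio := (hinf.comp (tendsto_id.const_mul_atTop two_pos)).div hinf hne
  rw [div_self hne] at hratio
  have h2 := tendsto_nhds_unique (hG 2 two_pos) hratio
  exact (Real.rpow_lt_one_of_one_lt_of_neg one_lt_two hρ).ne h2

theorem tendsto_mul_comp_div (hG : IsRegularlyVarying G ρ) (hG0 : Tendsto G atTop (𝓝 0))
    {a b : ℝ} (ha : 0 < a) (hb : 0 < b) :
    Tendsto (fun x => G (x / a) * G (x / b) / G x) atTop (𝓝 0) := by
  have h := (hG.tendsto_comp_div ha).mul (hG0.comp (tendsto_id.atTop_div_const hb))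
  rw [mul_zero] at h
  exact h.congr fun x => div_mul_eq_mul_div _ _ _

theorem tendsto_div_of_le_of_le_add_sq (hG : IsRegularlyVarying G ρ)
    (hG0 : Tendsto G atTop (𝓝 0)) (hnonneg : ∀ x, 0 ≤ G x) {N : ℝ → ℝ} {c C K : ℝ}
    (hc : 0 < c) (hC : 0 < C) (hlow : ∀ᶠ x in atTop, G (x / c) ≤ N x)
    (hup : ∀ᶠ x in atTop, N x ≤ G (x / c) + K * G (x / C) ^ 2) :
    Tendsto (fun x => N x / G x) atTop (𝓝 (c ^ (-ρ))) := by
  have hlim := (hG.tendsto_comp_div hc).add ((hG.tendsto_mul_comp_div hG0 hC hC).const_mul K)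
  rw [mul_zero, add_zero] at hlim
  refine tendsto_of_tendsto_of_tendsto_of_le_of_le' (hG.tendsto_comp_div hc) hlim ?_ ?_
  · filter_upwards [hlow] with x hx
    exact div_le_div_of_nonneg_right hx (hnonneg x)
  · filter_upwards [hup] with x hx
    calc N x / G x ≤ (G (x / c) + K * G (x / C) ^ 2) / G x :=
          div_le_div_of_nonneg_right hx (hnonneg x)
      _ = G (x / c) / G x + K * (G (x / C) * G (x / C) / G x) := by ring

end IsRegularlyVarying

section MovingMaximum

variable {Ω : Type*}

def mma1 (c0 c1 : ℝ) (ξ : ℤ → Ω → ℝ) (j : ℤ) (ω : Ω) : ℝ :=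
  max (c0 * ξ j ω) (c1 * ξ (j + 1) ω)

variable {ξ : ℤ → Ω → ℝ} {c0 c1 x : ℝ}

theorem setOf_mma1_gt (hc0 : 0 < c0) (hc1 : 0 < c1) (j : ℤ) :
    {ω | mma1 c0 c1 ξ j ω > x} = {ω | ξ j ω > x / c0} ∪ {ω | ξ (j + 1) ω > x / c1} := by
  ext ω
  simp only [mma1, Set.mem_ofPred_eq, Set.mem_union, gt_iff_lt, lt_max_iff,
    div_lt_iff₀ hc0, div_lt_iff₀ hc1, mul_comm]

theorem setOf_gt_subset_mma1_inter (hc0 : 0 < c0) (hc1 : 0 < c1) (hx : 0 ≤ x) :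
    {ω | ξ 1 ω > x / min c0 c1} ⊆
      {ω | mma1 c0 c1 ξ 0 ω > x} ∩ {ω | mma1 c0 c1 ξ 1 ω > x} := by
  intro ω hω
  have hm : 0 < min c0 c1 := lt_min hc0 hc1
  have h0 : ξ 1 ω > x / c0 :=
    (div_le_div_of_nonneg_left hx hm (min_le_left _ _)).trans_lt hω
  have h1 : ξ 1 ω > x / c1 :=
    (div_le_div_of_nonneg_left hx hm (min_le_right _ _)).trans_lt hω
  rw [setOf_mma1_gt hc0 hc1, setOf_mma1_gt hc0 hc1]
  exact ⟨Or.inr h1, Or.inl h0⟩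

theorem mma1_inter_subset (hc0 : 0 < c0) (hc1 : 0 < c1) (hx : 0 ≤ x) :
    {ω | mma1 c0 c1 ξ 0 ω > x} ∩ {ω | mma1 c0 c1 ξ 1 ω > x} ⊆
      {ω | ξ 1 ω > x / min c0 c1} ∪
        (({ω | ξ 0 ω > x / max c0 c1} ∩ {ω | ξ 1 ω > x / max c0 c1}) ∪
          ({ω | ξ 0 ω > x / max c0 c1} ∩ {ω | ξ 2 ω > x / max c0 c1}) ∪
            ({ω | ξ 1 ω > x / max c0 c1} ∩ {ω | ξ 2 ω > x / max c0 c1})) := by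
  have hM : ∀ {c y}, 0 < c → c ≤ max c0 c1 → y > x / c → y > x / max c0 c1 :=
    fun hc hcM hy => (div_le_div_of_nonneg_left hx hc hcM).trans_lt hy
  have hM0 : ∀ {y}, y > x / c0 → y > x / max c0 c1 := hM hc0 (le_max_left _ _)
  have hM1 : ∀ {y}, y > x / c1 → y > x / max c0 c1 := hM hc1 (le_max_right _ _)
  rw [setOf_mma1_gt hc0 hc1, setOf_mma1_gt hc0 hc1]
  rintro ω ⟨h0 | h1, h1' | h2⟩
  · exact Or.inr (Or.inl (Or.inl ⟨hM0 h0, hM0 h1'⟩))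
  · exact Or.inr (Or.inl (Or.inr ⟨hM0 h0, hM1 h2⟩))
  · left
    show ξ 1 ω > x / min c0 c1
    rcases min_choice c0 c1 with h | h <;> rw [h]
    exacts [h1', h1]
  · exact Or.inr (Or.inr ⟨hM1 h1, hM1 h2⟩)

end MovingMaximum

section Independent

variable {Ω : Type*} [MeasurableSpace Ω] {P : Measure Ω}
  {ξ : ℤ → Ω → ℝ} {c0 c1 x : ℝ}

theorem measureReal_gt_eq_of_map_eq (hmeas : ∀ j, Measurable (ξ j))
    (hident : ∀ j, Measure.map (ξ j) P = Measure.map (ξ 0) P) (j : ℤ) (y : ℝ) :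
    P.real {ω | ξ j ω > y} = P.real {ω | ξ 0 ω > y} := by
  have h : IdentDistrib (ξ j) (ξ 0) P P :=
    ⟨(hmeas j).aemeasurable, (hmeas 0).aemeasurable, hident j⟩
  simp only [measureReal_def]
  exact congrArg ENNReal.toReal (h.measure_mem_eq measurableSet_Ioi)

theorem measureReal_inter_gt_eq_mul (hmeas : ∀ j, Measurable (ξ j)) (hindep : iIndepFun ξ P)
    (hident : ∀ j, Measure.map (ξ j) P = Measure.map (ξ 0) P) {i j : ℤ} (hij : i ≠ j)
    (s t : ℝ) :
    P.real ({ω | ξ i ω > s} ∩ {ω | ξ j ω > t}) =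
      P.real {ω | ξ 0 ω > s} * P.real {ω | ξ 0 ω > t} := by
  rw [← measureReal_gt_eq_of_map_eq hmeas hident i,
    ← measureReal_gt_eq_of_map_eq hmeas hident j]
  simp only [measureReal_def, ← ENNReal.toReal_mul]
  exact congrArg ENNReal.toReal <| (hindep.indepFun hij).measure_inter_preimage_eq_mul
    (Set.Ioi s) (Set.Ioi t) measurableSet_Ioi measurableSet_Ioi

theorem measureReal_mma1_gt [IsFiniteMeasure P] (hmeas : ∀ j, Measurable (ξ j))
    (hindep : iIndepFun ξ P) (hident : ∀ j, Measure.map (ξ j) P = Measure.map (ξ 0) P)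
    (hc0 : 0 < c0) (hc1 : 0 < c1) (j : ℤ) :
    P.real {ω | mma1 c0 c1 ξ j ω > x} =
      P.real {ω | ξ 0 ω > x / c0} + P.real {ω | ξ 0 ω > x / c1}
        - P.real {ω | ξ 0 ω > x / c0} * P.real {ω | ξ 0 ω > x / c1} := by
  have h := measureReal_union_add_inter (μ := P) (s := {ω | ξ j ω > x / c0})
    (t := {ω | ξ (j + 1) ω > x / c1}) (measurableSet_lt measurable_const (hmeas _))
  rw [measureReal_inter_gt_eq_mul hmeas hindep hident (by omega),
    measureReal_gt_eq_of_map_eq hmeas hident j,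
    measureReal_gt_eq_of_map_eq hmeas hident (j + 1)] at h
  rw [setOf_mma1_gt hc0 hc1]
  linarith

theorem measureReal_le_mma1_inter [IsFiniteMeasure P] (hmeas : ∀ j, Measurable (ξ j))
    (hident : ∀ j, Measure.map (ξ j) P = Measure.map (ξ 0) P)
    (hc0 : 0 < c0) (hc1 : 0 < c1) (hx : 0 ≤ x) :
    P.real {ω | ξ 0 ω > x / min c0 c1} ≤
      P.real ({ω | mma1 c0 c1 ξ 0 ω > x} ∩ {ω | mma1 c0 c1 ξ 1 ω > x}) := by
  rw [← measureReal_gt_eq_of_map_eq hmeas hident 1]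
  exact measureReal_mono (setOf_gt_subset_mma1_inter hc0 hc1 hx)

theorem measureReal_mma1_inter_le [IsFiniteMeasure P] (hmeas : ∀ j, Measurable (ξ j))
    (hindep : iIndepFun ξ P) (hident : ∀ j, Measure.map (ξ j) P = Measure.map (ξ 0) P)
    (hc0 : 0 < c0) (hc1 : 0 < c1) (hx : 0 ≤ x) :
    P.real ({ω | mma1 c0 c1 ξ 0 ω > x} ∩ {ω | mma1 c0 c1 ξ 1 ω > x}) ≤
      P.real {ω | ξ 0 ω > x / min c0 c1} + 3 * P.real {ω | ξ 0 ω > x / max c0 c1} ^ 2 := by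
  have hpair : ∀ {i j : ℤ}, i ≠ j → P.real ({ω | ξ i ω > x / max c0 c1} ∩
      {ω | ξ j ω > x / max c0 c1}) = P.real {ω | ξ 0 ω > x / max c0 c1} ^ 2 := fun hij => by
    rw [measureReal_inter_gt_eq_mul hmeas hindep hident hij, sq]
  calc _ ≤ _ := measureReal_mono (mma1_inter_subset hc0 hc1 hx)
    _ ≤ _ := (measureReal_union_le _ _).trans (add_le_add_right
        ((measureReal_union_le _ _).trans (add_le_add_left (measureReal_union_le _ _) _)) _)
    _ = _ := by
      rw [measureReal_gt_eq_of_map_eq hmeas hident, hpair (by omega), hpair (by omega),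
        hpair (by omega)]
      ring

end Independent

theorem stmt_1_general
    {Ω : Type*} [MeasurableSpace Ω] (P : Measure Ω) [IsProbabilityMeasure P]
    (ξ : ℤ → Ω → ℝ) (hmeas : ∀ j, Measurable (ξ j))
    (hindep : iIndepFun ξ P)
    (hident : ∀ j, Measure.map (ξ j) P = Measure.map (ξ 0) P)
    (α : ℝ) (hα : 0 < α)
    (hRV : ∀ t : ℝ, 0 < t →
      Tendsto (fun x : ℝ => (P {ω | ξ 0 ω > t * x}).toReal / (P {ω | ξ 0 ω > x}).toReal)
        atTop (nhds (t ^ (-α))))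
    (c0 c1 : ℝ) (hc0 : 0 < c0) (hc1 : 0 < c1)
    (X : ℤ → Ω → ℝ) (hX : ∀ j ω, X j ω = max (c0 * ξ j ω) (c1 * ξ (j + 1) ω)) :
    Tendsto (fun x : ℝ =>
        (P ({ω | X 0 ω > x} ∩ {ω | X 1 ω > x})).toReal / (P {ω | X 0 ω > x}).toReal)
      atTop (nhds ((min c0 c1) ^ α / (c0 ^ α + c1 ^ α))) := by
  obtain rfl : X = mma1 c0 c1 ξ := funext₂ hX
  set G : ℝ → ℝ := fun x => P.real {ω | ξ 0 ω > x}
  have hG : IsRegularlyVarying G (-α) := hRV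
  have hG_nonneg : ∀ x, 0 ≤ G x := fun x => measureReal_nonneg
  have hG0 : Tendsto G atTop (𝓝 0) :=
    hG.tendsto_zero (neg_neg_of_pos hα)
      (fun a b hab => measureReal_mono fun ω h => hab.trans_lt h) hG_nonneg
  have hnum : Tendsto (fun x => P.real ({ω | mma1 c0 c1 ξ 0 ω > x} ∩
      {ω | mma1 c0 c1 ξ 1 ω > x}) / G x) atTop (𝓝 (min c0 c1 ^ α)) := by
    simpa only [neg_neg] using hG.tendsto_div_of_le_of_le_add_sq hG0 hG_nonneg
      (lt_min hc0 hc1) (lt_max_of_lt_left hc0)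
      (eventually_ge_atTop 0 |>.mono fun x hx =>
        measureReal_le_mma1_inter hmeas hident hc0 hc1 hx)
      (eventually_ge_atTop 0 |>.mono fun x hx =>
        measureReal_mma1_inter_le hmeas hindep hident hc0 hc1 hx)
  have hden : Tendsto (fun x => P.real {ω | mma1 c0 c1 ξ 0 ω > x} / G x) atTop
      (𝓝 (c0 ^ α + c1 ^ α)) := by
    have h := ((hG.tendsto_comp_div hc0).add (hG.tendsto_comp_div hc1)).sub
      (hG.tendsto_mul_comp_div hG0 hc0 hc1)
    simp only [neg_neg, sub_zero] at h
    refine h.congr fun x => ?_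
    rw [measureReal_mma1_gt hmeas hindep hident hc0 hc1]
    ring
  refine (hnum.div hden (by positivity)).congr' ?_
  filter_upwards [hG.eventually_ne_zero] with x hx
  exact div_div_div_cancel_right₀ hx _ _

/-- For the MMA(1) process `X j = max (c₀ ξ j) (c₁ ξ (j+1))`,
`lim_{x→∞} P(X₁ > x ∣ X₀ > x) = (min c₀ c₁)^α / (c₀^α + c₁^α)`, where the conditional
probability is `P(X₀ > x, X₁ > x)/P(X₀ > x)`. -/
theorem stmt_1
    {Ω : Type*} [MeasurableSpace Ω] (P : Measure Ω) [IsProbabilityMeasure P]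
    (ξ : ℤ → Ω → ℝ) (hmeas : ∀ j, Measurable (ξ j))
    (hindep : iIndepFun ξ P)
    (hident : ∀ j, Measure.map (ξ j) P = Measure.map (ξ 0) P)
    (hnonneg : ∀ j ω, 0 ≤ ξ j ω)
    (hpos : ∀ x : ℝ, 0 < P {ω | ξ 0 ω > x})
    (α : ℝ) (hα : 0 < α)
    (hRV : ∀ t : ℝ, 0 < t →
      Tendsto (fun x : ℝ => (P {ω | ξ 0 ω > t * x}).toReal / (P {ω | ξ 0 ω > x}).toReal)
        atTop (nhds (t ^ (-α))))
    (c0 c1 : ℝ) (hc0 : 0 < c0) (hc1 : 0 < c1)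
    (X : ℤ → Ω → ℝ) (hX : ∀ j ω, X j ω = max (c0 * ξ j ω) (c1 * ξ (j + 1) ω)) :
    Tendsto (fun x : ℝ =>
        (P ({ω | X 0 ω > x} ∩ {ω | X 1 ω > x})).toReal / (P {ω | X 0 ω > x}).toReal)
      atTop (nhds ((min c0 c1) ^ α / (c0 ^ α + c1 ^ α))) :=
  stmt_1_general P ξ hmeas hindep hident α hα hRV c0 c1 hc0 hc1 X hX
end

section
/- (Small blocks probability of exceedances in two adjacent blocks, MMA(1).) If in addition r_n^2 w_n → 0, then lim_{n→∞} P(A_1 ∩ A_2)/w_n = (min(c_0,c_1))^α / (c_0^α + c_1^α). -/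
/-!
The event `A₁ ∩ A₂` is essentially caused by the single variable `ξ_{r+1}`, shared by
`X_r ∈ I₁` and `X_{r+1} ∈ I₂`: if it exceeds `u / min(c₀, c₁)` both blocks exceed `u`.
Otherwise two distinct `ξ_k`, `k ∈ [1, 2r + 1]`, must exceed `u / max(c₀, c₁)`; by independence
this costs at most `(2r + 1)² w²`, which is `o(w)` because `r² w → 0`. Regular variation turns
`P(ξ₀ > u / min(c₀, c₁)) / w` into `min(c₀, c₁)^α / (c₀^α + c₁^α)`.
-/

open MeasureTheory Filter ProbabilityTheory Set Topology

section Combinatorics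

variable {x : ℤ → ℝ} {a b : ℝ} {r : ℤ}

/-- With `a = u / c₀` and `b = u / c₁`, this says that the MMA(1) path
`max (c₀ * x i) (c₁ * x (i + 1))` exceeds `u` at some `i ∈ [lo, hi]`. -/
def ExceedsOn (x : ℤ → ℝ) (a b : ℝ) (lo hi : ℤ) : Prop :=
  ∃ i, lo ≤ i ∧ i ≤ hi ∧ (a < x i ∨ b < x (i + 1))

theorem exceedsOn_adjacent_of_max_lt (hr : 1 ≤ r) (h : max a b < x (r + 1)) :
    ExceedsOn x a b 1 r ∧ ExceedsOn x a b (r + 1) (2 * r) :=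
  ⟨⟨r, hr, le_rfl, .inr (max_lt_iff.1 h).2⟩, ⟨r + 1, le_rfl, by omega, .inl (max_lt_iff.1 h).1⟩⟩

theorem max_lt_or_exists_offDiag_of_exceedsOn_adjacent
    (h₁ : ExceedsOn x a b 1 r) (h₂ : ExceedsOn x a b (r + 1) (2 * r)) :
    max a b < x (r + 1) ∨
      ∃ kl ∈ (Finset.Icc 1 (2 * r + 1)).offDiag, min a b < x kl.1 ∧ min a b < x kl.2 := by
  have left : (∃ k, 1 ≤ k ∧ k ≤ r ∧ min a b < x k) ∨ b < x (r + 1) := by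
    obtain ⟨i, hi, hir, ha | hb⟩ := h₁
    · exact .inl ⟨i, hi, hir, min_lt_of_left_lt ha⟩
    · rcases hir.lt_or_eq with hir | rfl
      · exact .inl ⟨i + 1, by omega, by omega, min_lt_of_right_lt hb⟩
      · exact .inr hb
  have right : (∃ l, r + 2 ≤ l ∧ l ≤ 2 * r + 1 ∧ min a b < x l) ∨ a < x (r + 1) := by
    obtain ⟨i, hri, hir, ha | hb⟩ := h₂
    · rcases hri.lt_or_eq with hri | rfl
      · exact .inl ⟨i, by omega, by omega, min_lt_of_left_lt ha⟩
      · exact .inr ha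
    · exact .inl ⟨i + 1, by omega, by omega, min_lt_of_right_lt hb⟩
  have pair {k l : ℤ} (hk : 1 ≤ k) (hkl : k < l) (hl : l ≤ 2 * r + 1) (hxk : min a b < x k)
      (hxl : min a b < x l) :
      ∃ kl ∈ (Finset.Icc 1 (2 * r + 1)).offDiag, min a b < x kl.1 ∧ min a b < x kl.2 :=
    ⟨(k, l), by simp only [Finset.mem_offDiag, Finset.mem_Icc]; omega, hxk, hxl⟩
  rcases left with ⟨k, hk, hkr, hxk⟩ | hb <;> rcases right with ⟨l, hrl, hl, hxl⟩ | ha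
  · exact .inr (pair hk (by omega) hl hxk hxl)
  · exact .inr (pair hk (by omega) (by omega) hxk (min_lt_of_left_lt ha))
  · exact .inr (pair (by omega) (by omega) hl (min_lt_of_right_lt hb) hxl)
  · exact .inl (max_lt ha hb)

end Combinatorics

theorem lt_max_mul_iff {c₀ c₁ : ℝ} (hc₀ : 0 < c₀) (hc₁ : 0 < c₁) {u y z : ℝ} :
    u < max (c₀ * y) (c₁ * z) ↔ c₀⁻¹ * u < y ∨ c₁⁻¹ * u < z := by
  rw [lt_max_iff, inv_mul_lt_iff₀ hc₀, inv_mul_lt_iff₀ hc₁]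

theorem setOf_max_mul_gt_eq_union {Ω : Type*} {c₀ c₁ : ℝ} (hc₀ : 0 < c₀) (hc₁ : 0 < c₁)
    (f g : Ω → ℝ) (u : ℝ) :
    {ω | max (c₀ * f ω) (c₁ * g ω) > u} = {ω | f ω > c₀⁻¹ * u} ∪ {ω | g ω > c₁⁻¹ * u} := by
  ext ω
  exact lt_max_mul_iff hc₀ hc₁

theorem inv_min_mul_eq_max {c₀ c₁ u : ℝ} (hc₀ : 0 < c₀) (hc₁ : 0 < c₁) (hu : 0 ≤ u) :
    (min c₀ c₁)⁻¹ * u = max (c₀⁻¹ * u) (c₁⁻¹ * u) := by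
  rw [← max_mul_of_nonneg _ _ hu]
  rcases le_total c₀ c₁ with h | h
  · rw [min_eq_left h, max_eq_left (inv_anti₀ hc₀ h)]
  · rw [min_eq_right h, max_eq_right (inv_anti₀ hc₁ h)]

/-- For independent copies `Y, Y'` with tail `p`, the denominator is
`P(max (c₀ Y) (c₁ Y') > u)`. -/
theorem tendsto_tail_div_tail_max {p : ℝ → ℝ} {α : ℝ} (hp : Tendsto p atTop (𝓝 0))
    (hpos : ∀ x, 0 < p x)
    (hRV : ∀ t : ℝ, 0 < t → Tendsto (fun x => p (t * x) / p x) atTop (𝓝 (t ^ (-α))))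
    {u : ℕ → ℝ} (hu : Tendsto u atTop atTop) {c₀ c₁ t : ℝ} (hc₀ : 0 < c₀) (hc₁ : 0 < c₁)
    (ht : 0 < t) :
    Tendsto (fun n => p (t * u n) /
        (p (c₀⁻¹ * u n) + p (c₁⁻¹ * u n) - p (c₀⁻¹ * u n) * p (c₁⁻¹ * u n)))
      atTop (𝓝 (t ^ (-α) / (c₀ ^ α + c₁ ^ α))) := by
  have hRVu (s : ℝ) (hs : 0 < s) : Tendsto (fun n => p (s * u n) / p (u n)) atTop (𝓝 (s ^ (-α))) :=
    (hRV s hs).comp hu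
  have hinv (c : ℝ) (hc : 0 < c) :
      Tendsto (fun n => p (c⁻¹ * u n) / p (u n)) atTop (𝓝 (c ^ α)) := by
    simpa only [Real.inv_rpow hc.le, Real.rpow_neg hc.le, inv_inv] using hRVu c⁻¹ (inv_pos.2 hc)
  have hden : Tendsto (fun n =>
      (p (c₀⁻¹ * u n) + p (c₁⁻¹ * u n) - p (c₀⁻¹ * u n) * p (c₁⁻¹ * u n)) / p (u n))
      atTop (𝓝 (c₀ ^ α + c₁ ^ α)) := by
    have h := ((hinv c₀ hc₀).add (hinv c₁ hc₁)).sub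
      ((hinv c₀ hc₀).mul (hp.comp (hu.const_mul_atTop (inv_pos.2 hc₁))))
    rw [mul_zero, sub_zero] at h
    refine h.congr fun n => ?_
    simp only [Function.comp_apply]
    field_simp [(hpos (u n)).ne']
  refine ((hRVu t ht).div hden (by positivity)).congr fun n => ?_
  exact div_div_div_cancel_right₀ (hpos (u n)).ne' _ _

theorem tendsto_odd_sq_mul_of_tendsto_sq_mul {r : ℕ → ℕ} {w : ℕ → ℝ} (hr : ∀ n, 0 < r n)
    (hw : ∀ n, 0 ≤ w n) (h : Tendsto (fun n => (r n : ℝ) ^ 2 * w n) atTop (𝓝 0)) :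
    Tendsto (fun n => (2 * r n + 1 : ℝ) ^ 2 * w n) atTop (𝓝 0) := by
  refine squeeze_zero (fun n => mul_nonneg (sq_nonneg _) (hw n)) (fun n => ?_)
    (by simpa using h.const_mul 9)
  have hrn : (1 : ℝ) ≤ r n := by exact_mod_cast hr n
  have hwn := hw n
  rw [← mul_assoc]
  gcongr
  nlinarith

section Probability

variable {Ω : Type*} [MeasurableSpace Ω] {P : Measure Ω}

theorem tendsto_measureReal_gt_atTop [IsFiniteMeasure P] {f : Ω → ℝ} (hf : Measurable f) :
    Tendsto (fun x : ℝ => P.real {ω | f ω > x}) atTop (𝓝 0) := by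
  have hempty : ⋂ x : ℝ, {ω | f ω > x} = ∅ :=
    iInter_eq_empty_iff.2 fun ω => ⟨f ω, (lt_irrefl (f ω) ·)⟩
  have h := tendsto_measure_iInter_atTop (μ := P) (s := fun x : ℝ => {ω | f ω > x})
    (fun x => (hf measurableSet_Ioi).nullMeasurableSet)
    (fun x y hxy ω (hω : y < f ω) => hxy.trans_lt hω) ⟨0, measure_ne_top P _⟩
  rw [hempty, measure_empty] at h
  exact (ENNReal.tendsto_toReal ENNReal.zero_ne_top).comp h

theorem measureReal_biUnion_offDiag_inter_le [IsFiniteMeasure P] {ι : Type*} (E : ι → Set Ω)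
    (s : Finset ι) {q : ℝ} (hq : ∀ k ∈ s, P.real (E k) ≤ q)
    (hprod : ∀ k ∈ s, ∀ l ∈ s, k ≠ l → P.real (E k ∩ E l) = P.real (E k) * P.real (E l)) :
    P.real (⋃ kl ∈ s.offDiag, E kl.1 ∩ E kl.2) ≤ s.card ^ 2 * q ^ 2 := by
  have hcard : (s.offDiag.card : ℝ) ≤ s.card ^ 2 := by
    rw [Finset.offDiag_card]
    exact_mod_cast (Nat.sub_le _ _).trans (sq _).ge
  calc P.real (⋃ kl ∈ s.offDiag, E kl.1 ∩ E kl.2)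
      ≤ ∑ kl ∈ s.offDiag, P.real (E kl.1 ∩ E kl.2) := measureReal_biUnion_finset_le _ _
    _ ≤ ∑ _kl ∈ s.offDiag, q ^ 2 := by
      refine Finset.sum_le_sum fun kl hkl => ?_
      obtain ⟨hk, hl, hkl⟩ := Finset.mem_offDiag.1 hkl
      rw [hprod _ hk _ hl hkl, sq]
      exact mul_le_mul (hq _ hk) (hq _ hl) measureReal_nonneg (measureReal_nonneg.trans (hq _ hk))
    _ = s.offDiag.card * q ^ 2 := by rw [Finset.sum_const, nsmul_eq_mul]
    _ ≤ s.card ^ 2 * q ^ 2 := by gcongr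

theorem measureReal_gt_eq_of_map_eq_s2 {f g : Ω → ℝ} (hf : Measurable f) (hg : Measurable g)
    (h : P.map f = P.map g) (x : ℝ) : P.real {ω | f ω > x} = P.real {ω | g ω > x} :=
  congrArg ENNReal.toReal <|
    (⟨hf.aemeasurable, hg.aemeasurable, h⟩ : IdentDistrib f g P P).measure_mem_eq measurableSet_Ioi

theorem ProbabilityTheory.IndepFun.measureReal_inter_gt {f g : Ω → ℝ} (h : IndepFun f g P)
    (a b : ℝ) :
    P.real ({ω | f ω > a} ∩ {ω | g ω > b}) = P.real {ω | f ω > a} * P.real {ω | g ω > b} := by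
  simp only [measureReal_def, ← ENNReal.toReal_mul]
  exact congrArg _ (h.measure_inter_preimage_eq_mul _ _ measurableSet_Ioi measurableSet_Ioi)

theorem ProbabilityTheory.IndepFun.measureReal_union_gt [IsFiniteMeasure P] {f g : Ω → ℝ}
    (h : IndepFun f g P) (hg : Measurable g) (a b : ℝ) :
    P.real ({ω | f ω > a} ∪ {ω | g ω > b}) =
      P.real {ω | f ω > a} + P.real {ω | g ω > b} -
        P.real {ω | f ω > a} * P.real {ω | g ω > b} := by
  rw [← h.measureReal_inter_gt]
  linarith [measureReal_union_add_inter (μ := P) (s := {ω | f ω > a}) (t := {ω | g ω > b})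
    (hg measurableSet_Ioi)]

variable [IsFiniteMeasure P] {ξ : ℤ → Ω → ℝ}

theorem measureReal_gt_max_le_exceedsOn_adjacent (hmeas : ∀ j, Measurable (ξ j))
    (hident : ∀ j, P.map (ξ j) = P.map (ξ 0)) (a b : ℝ) {r : ℕ} (hr : 1 ≤ r) :
    P.real {ω | ξ 0 ω > max a b} ≤
      P.real {ω | ExceedsOn (ξ · ω) a b 1 r ∧ ExceedsOn (ξ · ω) a b (r + 1) (2 * r)} := by
  rw [← measureReal_gt_eq_of_map_eq_s2 (hmeas _) (hmeas 0) (hident (r + 1))]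
  exact measureReal_mono fun ω (h : max a b < ξ (r + 1) ω) =>
    exceedsOn_adjacent_of_max_lt (by exact_mod_cast hr) h

theorem measureReal_exceedsOn_adjacent_le (hmeas : ∀ j, Measurable (ξ j))
    (hindep : iIndepFun ξ P) (hident : ∀ j, P.map (ξ j) = P.map (ξ 0)) {a b q : ℝ}
    (ha : P.real {ω | ξ 0 ω > a} ≤ q) (hb : P.real {ω | ξ 0 ω > b} ≤ q) (r : ℕ) :
    P.real {ω | ExceedsOn (ξ · ω) a b 1 r ∧ ExceedsOn (ξ · ω) a b (r + 1) (2 * r)} ≤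
      P.real {ω | ξ 0 ω > max a b} + (2 * r + 1) ^ 2 * q ^ 2 := by
  have hident' (j : ℤ) (x : ℝ) : P.real {ω | ξ j ω > x} = P.real {ω | ξ 0 ω > x} :=
    measureReal_gt_eq_of_map_eq_s2 (hmeas j) (hmeas 0) (hident j) x
  set s := Finset.Icc (1 : ℤ) (2 * r + 1)
  have hsub : {ω | ExceedsOn (ξ · ω) a b 1 r ∧ ExceedsOn (ξ · ω) a b (r + 1) (2 * r)} ⊆
      {ω | ξ (r + 1) ω > max a b} ∪
        ⋃ kl ∈ s.offDiag, {ω | ξ kl.1 ω > min a b} ∩ {ω | ξ kl.2 ω > min a b} := by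
    rintro ω ⟨h₁, h₂⟩
    rcases max_lt_or_exists_offDiag_of_exceedsOn_adjacent h₁ h₂ with h | ⟨kl, hkl, h⟩
    · exact .inl h
    · exact .inr (mem_iUnion₂.2 ⟨kl, hkl, h⟩)
  have hmin (k : ℤ) : P.real {ω | ξ k ω > min a b} ≤ q := by
    rw [hident']
    rcases min_choice a b with h | h <;> rw [h] <;> assumption
  have hcard : (s.card : ℝ) = 2 * r + 1 := by
    rw [Int.card_Icc, show (2 * (r : ℤ) + 1 + 1 - 1).toNat = 2 * r + 1 by omega]
    push_cast
    rfl
  calc _ ≤ _ := (measureReal_mono hsub).trans (measureReal_union_le _ _)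
    _ ≤ _ := by
      rw [hident', ← hcard]
      exact add_le_add_right (measureReal_biUnion_offDiag_inter_le _ s (fun k _ => hmin k)
        fun k _ l _ hkl => (hindep.indepFun hkl).measureReal_inter_gt _ _) _

end Probability

theorem stmt_2_general
    {Ω : Type*} [MeasurableSpace Ω] (P : Measure Ω) [IsProbabilityMeasure P]
    (ξ : ℤ → Ω → ℝ) (hmeas : ∀ j, Measurable (ξ j))
    (hindep : iIndepFun ξ P)
    (hident : ∀ j, Measure.map (ξ j) P = Measure.map (ξ 0) P)
    (hpos : ∀ x : ℝ, 0 < P {ω | ξ 0 ω > x})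
    (α : ℝ)
    (hRV : ∀ t : ℝ, 0 < t →
      Tendsto (fun x : ℝ => (P {ω | ξ 0 ω > t * x}).toReal / (P {ω | ξ 0 ω > x}).toReal)
        atTop (nhds (t ^ (-α))))
    (c0 c1 : ℝ) (hc0 : 0 < c0) (hc1 : 0 < c1)
    (X : ℤ → Ω → ℝ) (hX : ∀ j ω, X j ω = max (c0 * ξ j ω) (c1 * ξ (j + 1) ω))
    (u : ℕ → ℝ) (hu : Tendsto u atTop atTop)
    (w : ℕ → ℝ) (hw : ∀ n, w n = (P {ω | X 0 ω > u n}).toReal)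
    (r : ℕ → ℕ) (hrpos : ∀ n, 0 < r n)
    (A : ℕ → ℤ → Set Ω)
    (hA : ∀ n (j : ℤ), A n j =
      {ω | ∃ i : ℤ, (j - 1) * (r n : ℤ) + 1 ≤ i ∧ i ≤ j * (r n : ℤ) ∧ X i ω > u n})
    (hsmall : Tendsto (fun n => (r n : ℝ) ^ 2 * w n) atTop (nhds 0)) :
    Tendsto (fun n => (P (A n 1 ∩ A n 2)).toReal / w n)
      atTop (nhds ((min c0 c1) ^ α / (c0 ^ α + c1 ^ α))) := by
  set p : ℝ → ℝ := fun x => P.real {ω | ξ 0 ω > x}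
  have hppos (x : ℝ) : 0 < p x := ENNReal.toReal_pos (hpos x).ne' (measure_ne_top P _)
  have hξ₁ : ∀ x, P.real {ω | ξ 1 ω > x} = p x :=
    measureReal_gt_eq_of_map_eq_s2 (hmeas 1) (hmeas 0) (hident 1)
  have hw_union (n : ℕ) :
      w n = P.real ({ω | ξ 0 ω > c0⁻¹ * u n} ∪ {ω | ξ 1 ω > c1⁻¹ * u n}) := by
    rw [hw, ← measureReal_def, ← setOf_max_mul_gt_eq_union hc0 hc1]
    simp only [hX, zero_add]
  have hp_le_w (n : ℕ) : p (c0⁻¹ * u n) ≤ w n ∧ p (c1⁻¹ * u n) ≤ w n := by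
    rw [hw_union, ← hξ₁ (c1⁻¹ * u n)]
    exact ⟨measureReal_mono subset_union_left, measureReal_mono subset_union_right⟩
  have hwpos (n : ℕ) : 0 < w n := (hppos _).trans_le (hp_le_w n).1
  have hA₁₂ (n : ℕ) : A n 1 ∩ A n 2 = {ω | ExceedsOn (ξ · ω) (c0⁻¹ * u n) (c1⁻¹ * u n) 1 (r n) ∧
      ExceedsOn (ξ · ω) (c0⁻¹ * u n) (c1⁻¹ * u n) (r n + 1) (2 * r n)} := by
    ext ω
    simp only [hA, hX, mem_inter_iff, mem_ofPred_eq, gt_iff_lt, lt_max_mul_iff hc0 hc1, ExceedsOn]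
    norm_num
  have hmain : Tendsto (fun n => p ((min c0 c1)⁻¹ * u n) / w n) atTop
      (𝓝 ((min c0 c1) ^ α / (c0 ^ α + c1 ^ α))) := by
    have hmin := lt_min hc0 hc1
    simpa only [hw_union, (hindep.indepFun zero_ne_one).measureReal_union_gt (hmeas 1), hξ₁,
      Real.inv_rpow hmin.le, Real.rpow_neg hmin.le, inv_inv] using
      tendsto_tail_div_tail_max (tendsto_measureReal_gt_atTop (hmeas 0)) hppos hRV hu hc0 hc1
        (inv_pos.2 hmin)
  have herr : Tendsto (fun n => (2 * r n + 1) ^ 2 * w n ^ 2 / w n) atTop (𝓝 0) :=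
    (tendsto_odd_sq_mul_of_tendsto_sq_mul hrpos (fun n => (hwpos n).le) hsmall).congr fun n => by
      rw [sq (w n), ← mul_assoc, mul_div_cancel_right₀ _ (hwpos n).ne']
  refine tendsto_of_tendsto_of_tendsto_of_le_of_le' hmain (by simpa using hmain.add herr) ?_ ?_
  all_goals
    filter_upwards [hu.eventually (eventually_ge_atTop 0)] with n hn
    rw [← measureReal_def, hA₁₂, inv_min_mul_eq_max hc0 hc1 hn]
  · exact div_le_div_of_nonneg_right
      (measureReal_gt_max_le_exceedsOn_adjacent hmeas hident _ _ (hrpos n)) (hwpos n).le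
  · rw [← add_div]
    exact div_le_div_of_nonneg_right (measureReal_exceedsOn_adjacent_le hmeas hindep hident
      (hp_le_w n).1 (hp_le_w n).2 (r n)) (hwpos n).le

/-- Small blocks probability of exceedances in two adjacent blocks, MMA(1):
if `r_n^2 w_n → 0`, then `lim P(A₁ ∩ A₂)/w_n = (min c₀ c₁)^α / (c₀^α + c₁^α)`. -/
theorem stmt_2
    {Ω : Type*} [MeasurableSpace Ω] (P : Measure Ω) [IsProbabilityMeasure P]
    (ξ : ℤ → Ω → ℝ) (hmeas : ∀ j, Measurable (ξ j))
    (hindep : iIndepFun ξ P)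
    (hident : ∀ j, Measure.map (ξ j) P = Measure.map (ξ 0) P)
    (hnonneg : ∀ j ω, 0 ≤ ξ j ω)
    (hpos : ∀ x : ℝ, 0 < P {ω | ξ 0 ω > x})
    (α : ℝ) (hα : 0 < α)
    (hRV : ∀ t : ℝ, 0 < t →
      Tendsto (fun x : ℝ => (P {ω | ξ 0 ω > t * x}).toReal / (P {ω | ξ 0 ω > x}).toReal)
        atTop (nhds (t ^ (-α))))
    (c0 c1 : ℝ) (hc0 : 0 < c0) (hc1 : 0 < c1)
    (X : ℤ → Ω → ℝ) (hX : ∀ j ω, X j ω = max (c0 * ξ j ω) (c1 * ξ (j + 1) ω))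
    (u : ℕ → ℝ) (hu : Tendsto u atTop atTop)
    (w : ℕ → ℝ) (hw : ∀ n, w n = (P {ω | X 0 ω > u n}).toReal)
    (r : ℕ → ℕ) (hrpos : ∀ n, 0 < r n)
    (hr : Tendsto (fun n => (r n : ℝ)) atTop atTop)
    (hrw : Tendsto (fun n => (r n : ℝ) * w n) atTop (nhds 0))
    (A : ℕ → ℤ → Set Ω)
    (hA : ∀ n (j : ℤ), A n j =
      {ω | ∃ i : ℤ, (j - 1) * (r n : ℤ) + 1 ≤ i ∧ i ≤ j * (r n : ℤ) ∧ X i ω > u n})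
    (hsmall : Tendsto (fun n => (r n : ℝ) ^ 2 * w n) atTop (nhds 0)) :
    Tendsto (fun n => (P (A n 1 ∩ A n 2)).toReal / w n)
      atTop (nhds ((min c0 c1) ^ α / (c0 ^ α + c1 ^ α))) :=
  stmt_2_general P ξ hmeas hindep hident hpos α hRV c0 c1 hc0 hc1 X hX u hu w hw r hrpos A hA hsmall
end

section
/- (Gap between the last exceedance of block 1 and the first exceedance of block 2, MMA(1).) For the MMA(1) process, lim_{n→∞} (1/(r_n^3 w_n^2)) E[1_{A_1 ∩ A_2} · max(t_2^{first} − t_1^{last} − r_n, 0)] = θ^2/6, where θ = (max(c_0,c_1))^α / (c_0^α + c_1^α). -/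
/-!
Let `F` be the distribution function of `ξ₀` and `m = min (u / c₀) (u / c₁)`. Since `X i ≤ u` iff
`ξ i ≤ u / c₀` and `ξ (i + 1) ≤ u / c₁`, the event that `X` stays below `u` at `k + 1` consecutive
times is a rectangle in the innovations, of probability `F (u / c₀) * F m ^ k * F (u / c₁)`. By
inclusion–exclusion, consecutive exceedances at times `a < b` have probability
`F (u / c₀) * F (u / c₁) * (1 - F m) ^ 2 * F m ^ (b - a - 2)`, and the integral is the sum of these
over `a` in the first block and `b` in the second, weighted by `(b - a - r)⁺`. Since
`r (1 - F m) ≤ r w → 0`, the powers `F m ^ (b - a - 2)` tend to `1` uniformly, the weights add up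
to `~ r³ / 6`, and regular variation of `1 - F` gives `(1 - F m) / w → θ`.
-/

open MeasureTheory Filter ProbabilityTheory Topology Finset

section Sums

lemma sum_Icc_intCast (m : ℕ) : ∑ a ∈ Icc (1 : ℤ) m, (a : ℝ) = m * (m + 1) / 2 := by
  induction m with
  | zero => simp
  | succ m ih =>
    rw [Nat.cast_succ, ← insert_Icc_right_eq_Icc_add_one (by omega), sum_insert (by simp), ih]
    push_cast
    ring

lemma sum_Icc_sum_Icc_max_sub (m : ℕ) :
    ∑ a ∈ Icc (1 : ℤ) m, ∑ b ∈ Icc (1 : ℤ) m, max ((b - a : ℤ) : ℝ) 0 =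
      (m + 1) * m * (m - 1) / 6 := by
  induction m with
  | zero => simp
  | succ m ih =>
    have hins : Icc (1 : ℤ) ((m + 1 : ℕ) : ℤ) = insert ((m : ℤ) + 1) (Icc (1 : ℤ) m) := by
      rw [Nat.cast_succ, insert_Icc_right_eq_Icc_add_one (by omega)]
    have hrow : ∀ b ∈ insert ((m : ℤ) + 1) (Icc (1 : ℤ) m),
        max ((b - (m + 1) : ℤ) : ℝ) 0 = 0 := fun b hb => by
      have : (b : ℝ) ≤ m + 1 := by
        rw [← hins, mem_Icc] at hb
        exact_mod_cast hb.2
      exact max_eq_right (by push_cast; linarith)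
    have hcol : ∀ a ∈ Icc (1 : ℤ) m, max ((m + 1 - a : ℤ) : ℝ) 0 = m + 1 - a := fun a ha => by
      have : (a : ℝ) ≤ m := by exact_mod_cast (mem_Icc.1 ha).2
      rw [max_eq_left] <;> push_cast <;> linarith
    rw [hins, sum_insert (by simp), sum_congr rfl hrow, sum_const_zero, zero_add,
      sum_congr rfl fun a _ => sum_insert (s := Icc (1 : ℤ) m) (by simp), sum_add_distrib, ih,
      sum_congr rfl hcol, sum_sub_distrib, sum_const, Int.card_Icc, add_sub_cancel_right,
      Int.toNat_natCast, sum_Icc_intCast, nsmul_eq_mul]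
    push_cast
    ring

lemma sum_Icc_sum_Icc_max_sub_sub (m : ℕ) :
    ∑ a ∈ Icc (1 : ℤ) m, ∑ b ∈ Icc ((m : ℤ) + 1) (2 * m), max ((b - a - m : ℤ) : ℝ) 0 =
      (m + 1) * m * (m - 1) / 6 := by
  have hshift : Icc ((m : ℤ) + 1) (2 * m) = (Icc (1 : ℤ) m).map (addRightEmbedding (m : ℤ)) := by
    rw [map_add_right_Icc]
    congr 1 <;> ring
  rw [← sum_Icc_sum_Icc_max_sub m]
  refine sum_congr rfl fun a _ => ?_
  rw [hshift, sum_map]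
  refine sum_congr rfl fun b _ => ?_
  rw [addRightEmbedding_apply, add_sub_right_comm, add_sub_cancel_right]

end Sums

section Limits

lemma tendsto_pow_of_tendsto_mul_one_sub {ι : Type*} {l : Filter ι} {q : ι → ℝ} {k : ι → ℕ}
    (hq₀ : ∀ i, 0 ≤ q i) (hq₁ : ∀ i, q i ≤ 1) (h : Tendsto (fun i => k i * (1 - q i)) l (𝓝 0)) :
    Tendsto (fun i => q i ^ k i) l (𝓝 1) := by
  have hlow : Tendsto (fun i => 1 - k i * (1 - q i)) l (𝓝 1) := by
    simpa using tendsto_const_nhds.sub h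
  refine tendsto_of_tendsto_of_tendsto_of_le_of_le hlow tendsto_const_nhds (fun i => ?_)
    fun i => pow_le_one₀ (hq₀ i) (hq₁ i)
  have := one_add_mul_le_pow (a := q i - 1) (by linarith [hq₀ i]) (k i)
  rw [add_sub_cancel] at this
  linarith

lemma tendsto_sum_max_sub_sub_mul_pow_div_cube {q : ℕ → ℝ} {r : ℕ → ℕ} (hq₀ : ∀ n, 0 ≤ q n)
    (hq₁ : ∀ n, q n ≤ 1) (hr : Tendsto (fun n => (r n : ℝ)) atTop atTop)
    (hrq : Tendsto (fun n => r n * (1 - q n)) atTop (𝓝 0)) :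
    Tendsto (fun n => (∑ a ∈ Icc (1 : ℤ) (r n), ∑ b ∈ Icc ((r n : ℤ) + 1) (2 * r n),
        max ((b - a - r n : ℤ) : ℝ) 0 * q n ^ (b - a - 2).toNat) / r n ^ 3) atTop (𝓝 (1 / 6)) := by
  set T : ℕ → ℝ := fun n => ((r n : ℝ) + 1) * r n * (r n - 1) / 6
  have hsum : ∀ n, ∑ a ∈ Icc (1 : ℤ) (r n), ∑ b ∈ Icc ((r n : ℤ) + 1) (2 * r n),
      max ((b - a - r n : ℤ) : ℝ) 0 = T n := fun n => sum_Icc_sum_Icc_max_sub_sub (r n)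
  have hupper : ∀ n, ∑ a ∈ Icc (1 : ℤ) (r n), ∑ b ∈ Icc ((r n : ℤ) + 1) (2 * r n),
      max ((b - a - r n : ℤ) : ℝ) 0 * q n ^ (b - a - 2).toNat ≤ T n := fun n => by
    rw [← hsum]
    gcongr with a _ b _
    exact mul_le_of_le_one_right (le_max_right _ _) (pow_le_one₀ (hq₀ n) (hq₁ n))
  have hlower : ∀ n, q n ^ (2 * r n) * T n ≤ ∑ a ∈ Icc (1 : ℤ) (r n),
      ∑ b ∈ Icc ((r n : ℤ) + 1) (2 * r n),
        max ((b - a - r n : ℤ) : ℝ) 0 * q n ^ (b - a - 2).toNat := fun n => by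
    rw [← hsum, mul_sum]
    refine sum_le_sum fun a ha => ?_
    rw [mul_sum]
    refine sum_le_sum fun b hb => ?_
    rw [mul_comm]
    refine mul_le_mul_of_nonneg_left (pow_le_pow_of_le_one (hq₀ n) (hq₁ n) ?_) (le_max_right _ _)
    simp only [mem_Icc] at ha hb
    omega
  have hT : Tendsto (fun n => T n / r n ^ 3) atTop (𝓝 (1 / 6)) := by
    have : Tendsto (fun n => (1 - ((r n : ℝ)⁻¹) ^ 2) / 6) atTop (𝓝 ((1 - 0 ^ 2) / 6)) :=
      ((tendsto_inv_atTop_zero.comp hr).pow 2 |>.const_sub 1).div_const 6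
    refine (by norm_num : ((1 : ℝ) - 0 ^ 2) / 6 = 1 / 6) ▸ this.congr' ?_
    filter_upwards [hr.eventually_gt_atTop 0] with n hn
    field_simp
    ring
  have hpow : Tendsto (fun n => q n ^ (2 * r n)) atTop (𝓝 1) :=
    tendsto_pow_of_tendsto_mul_one_sub hq₀ hq₁ (by simpa [mul_assoc] using hrq.const_mul 2)
  refine tendsto_of_tendsto_of_tendsto_of_le_of_le (by simpa using hpow.mul hT) hT
    (fun n => ?_) fun n => div_le_div_of_nonneg_right (hupper n) (by positivity)
  rw [mul_div_assoc']
  exact div_le_div_of_nonneg_right (hlower n) (by positivity)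

end Limits

section RegularVariation

variable {ι : Type*} {l : Filter ι} {F : ℝ → ℝ} {α : ℝ} {u : ι → ℝ}

lemma tendsto_one_sub_div_const_div_one_sub
    (hRV : ∀ t : ℝ, 0 < t → Tendsto (fun x => (1 - F (t * x)) / (1 - F x)) atTop (𝓝 (t ^ (-α))))
    (hu : Tendsto u l atTop) {c : ℝ} (hc : 0 < c) :
    Tendsto (fun i => (1 - F (u i / c)) / (1 - F (u i))) l (𝓝 (c ^ α)) := by
  have h := (hRV c⁻¹ (inv_pos.2 hc)).comp hu
  rw [Real.inv_rpow hc.le, Real.rpow_neg hc.le, inv_inv] at h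
  simpa only [Function.comp_def, inv_mul_eq_div] using h

lemma one_sub_min_le_one_sub_mul (hF₀ : ∀ x, 0 ≤ F x) (hF₁ : ∀ x, F x ≤ 1) (a b : ℝ) :
    1 - F (min a b) ≤ 1 - F a * F b := by
  rcases min_choice a b with h | h <;> rw [h] <;> gcongr
  exacts [mul_le_of_le_one_right (hF₀ _) (hF₁ _), mul_le_of_le_one_left (hF₀ _) (hF₁ _)]

lemma min_div_div_eq_div_max {U c₀ c₁ : ℝ} (hU : 0 ≤ U) (hc₀ : 0 < c₀) (hc₁ : 0 < c₁) :
    min (U / c₀) (U / c₁) = U / max c₀ c₁ := by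
  rcases le_total c₀ c₁ with h | h
  · rw [max_eq_right h, min_eq_right (div_le_div_of_nonneg_left hU hc₀ h)]
  · rw [max_eq_left h, min_eq_left (div_le_div_of_nonneg_left hU hc₁ h)]

lemma tendsto_one_sub_min_div_one_sub_mul
    (hRV : ∀ t : ℝ, 0 < t → Tendsto (fun x => (1 - F (t * x)) / (1 - F x)) atTop (𝓝 (t ^ (-α))))
    (hF : Tendsto F atTop (𝓝 1)) (hF₁ : ∀ x, F x < 1) (hu : Tendsto u l atTop) {c₀ c₁ : ℝ}
    (hc₀ : 0 < c₀) (hc₁ : 0 < c₁) :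
    Tendsto (fun i => (1 - F (min (u i / c₀) (u i / c₁))) / (1 - F (u i / c₀) * F (u i / c₁))) l
      (𝓝 (max c₀ c₁ ^ α / (c₀ ^ α + c₁ ^ α))) := by
  have h₀ := tendsto_one_sub_div_const_div_one_sub hRV hu hc₀
  have h₁ := tendsto_one_sub_div_const_div_one_sub hRV hu hc₁
  have hmax : Tendsto (fun i => (1 - F (min (u i / c₀) (u i / c₁))) / (1 - F (u i))) l
      (𝓝 (max c₀ c₁ ^ α)) := by
    refine (tendsto_one_sub_div_const_div_one_sub hRV hu (lt_max_of_lt_left hc₀)).congr' ?_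
    filter_upwards [hu.eventually_ge_atTop 0] with i hi
    rw [min_div_div_eq_div_max hi hc₀ hc₁]
  have hF₁' : Tendsto (fun i => 1 - F (u i / c₁)) l (𝓝 0) := by
    simpa using (hF.comp (hu.atTop_div_const hc₁)).const_sub 1
  -- `1 - F a F b = (1 - F a) + (1 - F b) - (1 - F a) (1 - F b)`
  have hden : Tendsto (fun i => (1 - F (u i / c₀) * F (u i / c₁)) / (1 - F (u i))) l
      (𝓝 (c₀ ^ α + c₁ ^ α)) := by
    have := (h₀.add h₁).sub (h₀.mul hF₁')
    rw [mul_zero, sub_zero] at this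
    refine this.congr fun i => ?_
    have : 1 - F (u i) ≠ 0 := (sub_pos.2 (hF₁ _)).ne'
    field_simp
    ring
  refine (hmax.div hden (by positivity)).congr fun i => ?_
  exact div_div_div_cancel_right₀ (sub_pos.2 (hF₁ _)).ne' _ _

lemma tendsto_normalized_gap_sum
    (hRV : ∀ t : ℝ, 0 < t → Tendsto (fun x => (1 - F (t * x)) / (1 - F x)) atTop (𝓝 (t ^ (-α))))
    (hF : Tendsto F atTop (𝓝 1)) (hF₀ : ∀ x, 0 ≤ F x) (hF₁ : ∀ x, F x < 1) {c₀ c₁ : ℝ}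
    (hc₀ : 0 < c₀) (hc₁ : 0 < c₁) {u : ℕ → ℝ} (hu : Tendsto u atTop atTop) {r : ℕ → ℕ}
    (hr : Tendsto (fun n => (r n : ℝ)) atTop atTop)
    (hrw : Tendsto (fun n => r n * (1 - F (u n / c₀) * F (u n / c₁))) atTop (𝓝 0)) :
    Tendsto (fun n => F (u n / c₀) * F (u n / c₁) *
        ((1 - F (min (u n / c₀) (u n / c₁))) / (1 - F (u n / c₀) * F (u n / c₁))) ^ 2 *
        ((∑ a ∈ Icc (1 : ℤ) (r n), ∑ b ∈ Icc ((r n : ℤ) + 1) (2 * r n),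
          max ((b - a - r n : ℤ) : ℝ) 0 * F (min (u n / c₀) (u n / c₁)) ^ (b - a - 2).toNat) /
            r n ^ 3)) atTop
      (𝓝 ((max c₀ c₁ ^ α / (c₀ ^ α + c₁ ^ α)) ^ 2 / 6)) := by
  have hrm : Tendsto (fun n => r n * (1 - F (min (u n / c₀) (u n / c₁)))) atTop (𝓝 0) :=
    squeeze_zero (fun n => mul_nonneg (by positivity) (sub_nonneg.2 (hF₁ _).le))
      (fun n => mul_le_mul_of_nonneg_left
        (one_sub_min_le_one_sub_mul hF₀ (fun x => (hF₁ x).le) _ _) (by positivity)) hrw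
  have hF₀₁ : Tendsto (fun n => F (u n / c₀) * F (u n / c₁)) atTop (𝓝 (1 * 1)) :=
    (hF.comp (hu.atTop_div_const hc₀)).mul (hF.comp (hu.atTop_div_const hc₁))
  rw [show ∀ θ : ℝ, θ ^ 2 / 6 = 1 * 1 * θ ^ 2 * (1 / 6) by intro; ring]
  exact (hF₀₁.mul ((tendsto_one_sub_min_div_one_sub_mul hRV hF hF₁ hu hc₀ hc₁).pow 2)).mul
    (tendsto_sum_max_sub_sub_mul_pow_div_cube (fun n => hF₀ _) (fun n => (hF₁ _).le) hr hrm)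

end RegularVariation

section Exceedances

variable {Ω : Type*}

def noExceedance (X : ℤ → Ω → ℝ) (U : ℝ) (s t : ℤ) : Set Ω :=
  {ω | ∀ i, s ≤ i → i ≤ t → X i ω ≤ U}

def gapEvent (X : ℤ → Ω → ℝ) (U : ℝ) (a b : ℤ) : Set Ω :=
  {ω | U < X a ω ∧ (∀ i, a < i → i < b → X i ω ≤ U) ∧ U < X b ω}

variable {X : ℤ → Ω → ℝ} {U : ℝ}

lemma gapEvent_eq_sdiff {a b : ℤ} (hab : a < b) :
    gapEvent X U a b = noExceedance X U (a + 1) (b - 1) \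
      (noExceedance X U a (b - 1) ∪ noExceedance X U (a + 1) b) := by
  ext ω
  simp only [gapEvent, noExceedance, Set.mem_ofPred_eq, Set.mem_sdiff, Set.mem_union]
  constructor
  · rintro ⟨ha, hmid, hb⟩
    refine ⟨fun i h₁ h₂ => hmid i (by omega) (by omega), ?_⟩
    rintro (h | h)
    · exact (h a le_rfl (by omega)).not_gt ha
    · exact (h b (by omega) le_rfl).not_gt hb
  · rintro ⟨hmid, hout⟩
    simp only [not_or, not_forall, not_le] at hout
    obtain ⟨⟨i, hai, hib, hi⟩, ⟨k, hak, hkb, hk⟩⟩ := hout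
    obtain rfl : i = a := by_contra fun h => (hmid i (by omega) hib).not_gt hi
    obtain rfl : k = b := by_contra fun h => (hmid k hak (by omega)).not_gt hk
    exact ⟨hi, fun j h₁ h₂ => hmid j (by omega) (by omega), hk⟩

lemma noExceedance_inter_noExceedance {a b : ℤ} (hab : a < b) :
    noExceedance X U a (b - 1) ∩ noExceedance X U (a + 1) b = noExceedance X U a b := by
  ext ω
  simp only [noExceedance, Set.mem_ofPred_eq, Set.mem_inter_iff]
  refine ⟨fun ⟨h₁, h₂⟩ i hai hib => ?_, fun h => ⟨fun i _ _ => h i (by omega) (by omega),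
    fun i _ _ => h i (by omega) (by omega)⟩⟩
  rcases lt_or_eq_of_le hib with hib | rfl
  · exact h₁ i hai (by omega)
  · exact h₂ i (by omega) le_rfl

variable {p q s : ℤ}

lemma mem_gapEvent_iff {a b : ℤ} (ha : a ∈ Icc p q) (hb : b ∈ Icc (q + 1) s) {ω : Ω} :
    ω ∈ gapEvent X U a b ↔ IsGreatest {i | p ≤ i ∧ i ≤ q ∧ X i ω > U} a ∧
      IsLeast {i | q + 1 ≤ i ∧ i ≤ s ∧ X i ω > U} b := by
  rw [mem_Icc] at ha hb
  constructor
  · rintro ⟨hXa, hmid, hXb⟩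
    exact ⟨⟨⟨ha.1, ha.2, hXa⟩, fun i ⟨_, _, hi⟩ => le_of_not_gt fun hai =>
        (hmid i hai (by omega)).not_gt hi⟩,
      ⟨⟨hb.1, hb.2, hXb⟩, fun i ⟨_, _, hi⟩ => le_of_not_gt fun hib =>
        (hmid i (by omega) hib).not_gt hi⟩⟩
  · rintro ⟨⟨⟨-, -, hXa⟩, hmax⟩, ⟨⟨-, -, hXb⟩, hmin⟩⟩
    refine ⟨hXa, fun i hai hib => le_of_not_gt fun hi => ?_, hXb⟩
    rcases le_or_gt i q with hiq | hiq
    · exact (hmax ⟨by omega, hiq, hi⟩).not_gt hai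
    · exact (hmin ⟨hiq, by omega, hi⟩).not_gt hib

lemma isGreatest_csSup_of_subset_Icc {S : Set ℤ} (hS : S ⊆ Set.Icc p q) (hne : S.Nonempty) :
    IsGreatest S (sSup S) :=
  ⟨hne.csSup_mem ((Set.finite_Icc p q).subset hS), fun _ hi => le_csSup (bddAbove_Icc.mono hS) hi⟩

lemma isLeast_csInf_of_subset_Icc {S : Set ℤ} (hS : S ⊆ Set.Icc p q) (hne : S.Nonempty) :
    IsLeast S (sInf S) :=
  ⟨hne.csInf_mem ((Set.finite_Icc p q).subset hS), fun _ hi => csInf_le (bddBelow_Icc.mono hS) hi⟩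

/-- If both `[p, q]` and `[q + 1, s]` contain exceedances, the last one in `[p, q]` and the first
one in `[q + 1, s]` form the only pair `(a, b)` with `ω ∈ gapEvent X U a b`; otherwise there is
none. -/
lemma indicator_eq_sum_indicator_gapEvent (f : ℤ → ℤ → ℝ) (ω : Ω) :
    ({ω | ∃ i, p ≤ i ∧ i ≤ q ∧ X i ω > U} ∩ {ω | ∃ i, q + 1 ≤ i ∧ i ≤ s ∧ X i ω > U}).indicator
        (fun ω => f (sSup {i | p ≤ i ∧ i ≤ q ∧ X i ω > U})
          (sInf {i | q + 1 ≤ i ∧ i ≤ s ∧ X i ω > U})) ω =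
      ∑ a ∈ Icc p q, ∑ b ∈ Icc (q + 1) s, (gapEvent X U a b).indicator (fun _ => f a b) ω := by
  set S₁ := {i | p ≤ i ∧ i ≤ q ∧ X i ω > U}
  set S₂ := {i | q + 1 ≤ i ∧ i ≤ s ∧ X i ω > U}
  by_cases hω : ω ∈ {ω | ∃ i, p ≤ i ∧ i ≤ q ∧ X i ω > U} ∩
      {ω | ∃ i, q + 1 ≤ i ∧ i ≤ s ∧ X i ω > U}
  · have h₁ := isGreatest_csSup_of_subset_Icc (S := S₁) (fun i hi => ⟨hi.1, hi.2.1⟩) hω.1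
    have h₂ := isLeast_csInf_of_subset_Icc (S := S₂) (fun i hi => ⟨hi.1, hi.2.1⟩) hω.2
    have hmem : ∀ a ∈ Icc p q, ∀ b ∈ Icc (q + 1) s,
        ω ∈ gapEvent X U a b ↔ a = sSup S₁ ∧ b = sInf S₂ := fun a ha b hb => by
      rw [mem_gapEvent_iff ha hb]
      exact ⟨fun h => ⟨h.1.unique h₁, h.2.unique h₂⟩, by rintro ⟨rfl, rfl⟩; exact ⟨h₁, h₂⟩⟩
    have ha₀ : sSup S₁ ∈ Icc p q := mem_Icc.2 ⟨h₁.1.1, h₁.1.2.1⟩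
    have hb₀ : sInf S₂ ∈ Icc (q + 1) s := mem_Icc.2 ⟨h₂.1.1, h₂.1.2.1⟩
    rw [Set.indicator_of_mem hω,
      sum_eq_single_of_mem _ ha₀ fun a ha hne => sum_eq_zero fun b hb =>
        Set.indicator_of_notMem (fun h => hne ((hmem a ha b hb).1 h).1) _,
      sum_eq_single_of_mem _ hb₀ fun b hb hne =>
        Set.indicator_of_notMem (fun h => hne ((hmem _ ha₀ b hb).1 h).2) _,
      Set.indicator_of_mem ((hmem _ ha₀ _ hb₀).2 ⟨rfl, rfl⟩)]
  · rw [Set.indicator_of_notMem hω]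
    refine (sum_eq_zero fun a ha => sum_eq_zero fun b hb => Set.indicator_of_notMem ?_ _).symm
    intro hgap
    obtain ⟨h₁, h₂⟩ := (mem_gapEvent_iff ha hb).1 hgap
    exact hω ⟨⟨a, h₁.1⟩, ⟨b, h₂.1⟩⟩

variable [MeasurableSpace Ω] {P : Measure Ω}

lemma measurableSet_noExceedance (hX : ∀ i, Measurable (X i)) (s t : ℤ) :
    MeasurableSet (noExceedance X U s t) := by
  simp only [noExceedance, Set.ofPred_forall]
  exact .iInter fun i => .iInter fun _ => .iInter fun _ => hX i measurableSet_Iic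

lemma measurableSet_gapEvent (hX : ∀ i, Measurable (X i)) (a b : ℤ) :
    MeasurableSet (gapEvent X U a b) := by
  simp only [gapEvent, Set.ofPred_and, Set.ofPred_forall]
  exact (hX a measurableSet_Ioi).inter
    ((MeasurableSet.iInter fun i => .iInter fun _ => .iInter fun _ => hX i measurableSet_Iic).inter
      (hX b measurableSet_Ioi))

lemma measureReal_gapEvent [IsFiniteMeasure P] (hX : ∀ i, Measurable (X i)) {a b : ℤ}
    (hab : a < b) :
    P.real (gapEvent X U a b) = P.real (noExceedance X U (a + 1) (b - 1)) -
      P.real (noExceedance X U a (b - 1)) - P.real (noExceedance X U (a + 1) b) +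
      P.real (noExceedance X U a b) := by
  have hsub : noExceedance X U a (b - 1) ∪ noExceedance X U (a + 1) b ⊆
      noExceedance X U (a + 1) (b - 1) := by
    rintro ω (h | h) i hai hib
    exacts [h i (by omega) hib, h i hai (by omega)]
  have hincl := measureReal_union_add_inter (μ := P) (s := noExceedance X U a (b - 1))
    (measurableSet_noExceedance hX (a + 1) b)
  rw [noExceedance_inter_noExceedance hab] at hincl
  rw [gapEvent_eq_sdiff hab, measureReal_sdiff hsub
    ((measurableSet_noExceedance hX _ _).union (measurableSet_noExceedance hX _ _))]
  linarith

lemma setIntegral_exceedance_eq_sum [IsFiniteMeasure P] (hX : ∀ i, Measurable (X i))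
    (f : ℤ → ℤ → ℝ) :
    ∫ ω in {ω | ∃ i, p ≤ i ∧ i ≤ q ∧ X i ω > U} ∩ {ω | ∃ i, q + 1 ≤ i ∧ i ≤ s ∧ X i ω > U},
        f (sSup {i | p ≤ i ∧ i ≤ q ∧ X i ω > U}) (sInf {i | q + 1 ≤ i ∧ i ≤ s ∧ X i ω > U}) ∂P =
      ∑ a ∈ Icc p q, ∑ b ∈ Icc (q + 1) s, f a b * P.real (gapEvent X U a b) := by
  have hA : ∀ p q, MeasurableSet {ω | ∃ i, p ≤ i ∧ i ≤ q ∧ X i ω > U} := fun p q => by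
    simp only [Set.ofPred_exists, Set.ofPred_and]
    exact .iUnion fun i => (MeasurableSet.const _).inter
      ((MeasurableSet.const _).inter (hX i measurableSet_Ioi))
  have hint : ∀ a b, Integrable ((gapEvent X U a b).indicator fun _ => f a b) P := fun a b =>
    (integrable_const _).indicator (measurableSet_gapEvent hX a b)
  rw [← integral_indicator ((hA p q).inter (hA (q + 1) s)),
    funext (indicator_eq_sum_indicator_gapEvent f),
    integral_finsetSum _ fun a _ => integrable_finsetSum _ fun b _ => hint a b]
  refine sum_congr rfl fun a _ => ?_
  rw [integral_finsetSum _ fun b _ => hint a b]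
  refine sum_congr rfl fun b _ => ?_
  rw [integral_indicator_const _ (measurableSet_gapEvent hX a b), smul_eq_mul, mul_comm]

end Exceedances

section Distributions

variable {Ω ι β : Type*} [MeasurableSpace Ω] [MeasurableSpace β] {P : Measure Ω}

lemma measureReal_biInter_preimage_eq_prod {ξ : ι → Ω → β} (hmeas : ∀ j, Measurable (ξ j))
    (hindep : iIndepFun ξ P) {i₀ : ι} (hident : ∀ j, P.map (ξ j) = P.map (ξ i₀))
    (s : Finset ι) {S : ι → Set β} (hS : ∀ j, MeasurableSet (S j)) :
    P.real (⋂ j ∈ s, ξ j ⁻¹' S j) = ∏ j ∈ s, (P.map (ξ i₀)).real (S j) := by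
  rw [measureReal_def, hindep.measure_inter_preimage_eq_mul s fun j _ => hS j,
    ENNReal.toReal_prod]
  refine prod_congr rfl fun j _ => ?_
  rw [← hident j, measureReal_def, Measure.map_apply (hmeas j) (hS j)]

lemma measureReal_gt_eq_one_sub_cdf [IsProbabilityMeasure P] {Y : Ω → ℝ} (hY : Measurable Y)
    (x : ℝ) : P.real {ω | Y ω > x} = 1 - cdf (P.map Y) x := by
  have := Measure.isProbabilityMeasure_map (μ := P) hY.aemeasurable
  have hcompl : {ω | Y ω > x} = (Y ⁻¹' Set.Iic x)ᶜ := by ext; simp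
  rw [hcompl, probReal_compl_eq_one_sub (hY measurableSet_Iic), cdf_eq_real,
    map_measureReal_apply hY measurableSet_Iic]

end Distributions

section MMA

variable {Ω : Type*}

def mma (c₀ c₁ : ℝ) (ξ : ℤ → Ω → ℝ) (j : ℤ) (ω : Ω) : ℝ :=
  max (c₀ * ξ j ω) (c₁ * ξ (j + 1) ω)

variable {c₀ c₁ : ℝ} {ξ : ℤ → Ω → ℝ} {U : ℝ}

lemma mma_le_iff (hc₀ : 0 < c₀) (hc₁ : 0 < c₁) {j : ℤ} {ω : Ω} :
    mma c₀ c₁ ξ j ω ≤ U ↔ ξ j ω ≤ U / c₀ ∧ ξ (j + 1) ω ≤ U / c₁ := by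
  rw [mma, max_le_iff, le_div_iff₀ hc₀, le_div_iff₀ hc₁, mul_comm c₀, mul_comm c₁]

/-- A window of `MMA(1)` values below `U` constrains each innovation in the window separately:
the first one only through `c₀`, the one after the window only through `c₁`. -/
lemma noExceedance_mma_eq (hc₀ : 0 < c₀) (hc₁ : 0 < c₁) (s t : ℤ) :
    noExceedance (mma c₀ c₁ ξ) U s t =
      ⋂ j ∈ Icc s (t + 1), ξ j ⁻¹' {x | (j ≤ t → x ≤ U / c₀) ∧ (s < j → x ≤ U / c₁)} := by
  ext ω
  simp only [noExceedance, mma_le_iff hc₀ hc₁, Set.mem_ofPred_eq, Set.mem_iInter, mem_Icc,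
    Set.mem_preimage]
  constructor
  · intro h j hj
    exact ⟨fun hjt => (h j hj.1 hjt).1,
      fun hsj => by simpa using (h (j - 1) (by omega) (by omega)).2⟩
  · intro h i hsi hit
    exact ⟨(h i ⟨hsi, by omega⟩).1 hit, (h (i + 1) ⟨by omega, by omega⟩).2 (by omega)⟩

variable [MeasurableSpace Ω] {P : Measure Ω} [IsProbabilityMeasure P]

lemma measurable_mma (hmeas : ∀ j, Measurable (ξ j)) (j : ℤ) : Measurable (mma c₀ c₁ ξ j) :=
  ((hmeas j).const_mul c₀).max ((hmeas (j + 1)).const_mul c₁)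

lemma measureReal_noExceedance_mma (hmeas : ∀ j, Measurable (ξ j)) (hindep : iIndepFun ξ P)
    (hident : ∀ j, P.map (ξ j) = P.map (ξ 0)) (hc₀ : 0 < c₀) (hc₁ : 0 < c₁) {s t : ℤ}
    (hst : s ≤ t) :
    P.real (noExceedance (mma c₀ c₁ ξ) U s t) =
      cdf (P.map (ξ 0)) (U / c₀) * cdf (P.map (ξ 0)) (min (U / c₀) (U / c₁)) ^ (t - s).toNat *
        cdf (P.map (ξ 0)) (U / c₁) := by
  have := Measure.isProbabilityMeasure_map (μ := P) (hmeas 0).aemeasurable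
  have hS : ∀ j, MeasurableSet {x : ℝ | (j ≤ t → x ≤ U / c₀) ∧ (s < j → x ≤ U / c₁)} :=
    fun j => ((MeasurableSet.const _).imp measurableSet_Iic).inter
      ((MeasurableSet.const _).imp measurableSet_Iic)
  have hIcc : Icc s (t + 1) = insert s (insert (t + 1) (Ioo s (t + 1))) := by
    ext j
    simp only [mem_Icc, mem_insert, mem_Ioo]
    omega
  have hfirst : {x : ℝ | (s ≤ t → x ≤ U / c₀) ∧ (s < s → x ≤ U / c₁)} = Set.Iic (U / c₀) := by
    ext x
    simp [hst]
  have hlast : {x : ℝ | (t + 1 ≤ t → x ≤ U / c₀) ∧ (s < t + 1 → x ≤ U / c₁)} =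
      Set.Iic (U / c₁) := by
    ext x
    simp [Int.lt_add_one_iff.2 hst]
  have hmid : ∀ j ∈ Ioo s (t + 1), (P.map (ξ 0)).real
      {x : ℝ | (j ≤ t → x ≤ U / c₀) ∧ (s < j → x ≤ U / c₁)} =
        cdf (P.map (ξ 0)) (min (U / c₀) (U / c₁)) := fun j hj => by
    rw [mem_Ioo] at hj
    rw [cdf_eq_real, ← Set.Iic_inter_Iic]
    congr 1
    ext x
    simp [hj.1, Int.lt_add_one_iff.1 hj.2]
  rw [noExceedance_mma_eq hc₀ hc₁, measureReal_biInter_preimage_eq_prod hmeas hindep hident _ hS,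
    hIcc, prod_insert (by simp; omega), prod_insert (by simp), prod_congr rfl hmid, prod_const,
    Int.card_Ioo, hfirst, hlast, (by omega : t + 1 - s - 1 = t - s)]
  simp only [cdf_eq_real]
  ring

lemma measureReal_mma_gt (hmeas : ∀ j, Measurable (ξ j)) (hindep : iIndepFun ξ P)
    (hident : ∀ j, P.map (ξ j) = P.map (ξ 0)) (hc₀ : 0 < c₀) (hc₁ : 0 < c₁) :
    P.real {ω | mma c₀ c₁ ξ 0 ω > U} =
      1 - cdf (P.map (ξ 0)) (U / c₀) * cdf (P.map (ξ 0)) (U / c₁) := by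
  have hcompl : {ω | mma c₀ c₁ ξ 0 ω > U} = (noExceedance (mma c₀ c₁ ξ) U 0 0)ᶜ := by
    ext ω
    simp only [noExceedance, Set.mem_compl_iff, Set.mem_ofPred_eq, not_forall, not_le]
    exact ⟨fun h => ⟨0, le_rfl, le_rfl, h⟩, fun ⟨i, h₀, h₁, h⟩ => le_antisymm h₁ h₀ ▸ h⟩
  rw [hcompl, probReal_compl_eq_one_sub (measurableSet_noExceedance (measurable_mma hmeas) 0 0),
    measureReal_noExceedance_mma hmeas hindep hident hc₀ hc₁ le_rfl]
  simp

lemma measureReal_gapEvent_mma (hmeas : ∀ j, Measurable (ξ j)) (hindep : iIndepFun ξ P)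
    (hident : ∀ j, P.map (ξ j) = P.map (ξ 0)) (hc₀ : 0 < c₀) (hc₁ : 0 < c₁) {a b : ℤ}
    (hab : a + 2 ≤ b) :
    P.real (gapEvent (mma c₀ c₁ ξ) U a b) =
      cdf (P.map (ξ 0)) (U / c₀) * cdf (P.map (ξ 0)) (U / c₁) *
        (1 - cdf (P.map (ξ 0)) (min (U / c₀) (U / c₁))) ^ 2 *
          cdf (P.map (ξ 0)) (min (U / c₀) (U / c₁)) ^ (b - a - 2).toNat := by
  have hwin := fun {s t : ℤ} (hst : s ≤ t) =>
    measureReal_noExceedance_mma (U := U) hmeas hindep hident hc₀ hc₁ hst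
  rw [measureReal_gapEvent (measurable_mma hmeas) (by omega), hwin (by omega), hwin (by omega),
    hwin (by omega), hwin (by omega), (by omega : (b - 1 - (a + 1)).toNat = (b - a - 2).toNat),
    (by omega : (b - 1 - a).toNat = (b - a - 2).toNat + 1),
    (by omega : (b - (a + 1)).toNat = (b - a - 2).toNat + 1),
    (by omega : (b - a).toNat = (b - a - 2).toNat + 2)]
  ring

lemma setIntegral_gap_mma (hmeas : ∀ j, Measurable (ξ j)) (hindep : iIndepFun ξ P)
    (hident : ∀ j, P.map (ξ j) = P.map (ξ 0)) (hc₀ : 0 < c₀) (hc₁ : 0 < c₁) {r : ℕ} :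
    ∫ ω in {ω | ∃ i, 1 ≤ i ∧ i ≤ (r : ℤ) ∧ mma c₀ c₁ ξ i ω > U} ∩
        {ω | ∃ i, (r : ℤ) + 1 ≤ i ∧ i ≤ 2 * (r : ℤ) ∧ mma c₀ c₁ ξ i ω > U},
        max ((sInf {i | (r : ℤ) + 1 ≤ i ∧ i ≤ 2 * (r : ℤ) ∧ mma c₀ c₁ ξ i ω > U} -
          sSup {i | 1 ≤ i ∧ i ≤ (r : ℤ) ∧ mma c₀ c₁ ξ i ω > U} - r : ℤ) : ℝ) 0 ∂P =
      cdf (P.map (ξ 0)) (U / c₀) * cdf (P.map (ξ 0)) (U / c₁) *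
        (1 - cdf (P.map (ξ 0)) (min (U / c₀) (U / c₁))) ^ 2 *
          ∑ a ∈ Icc (1 : ℤ) r, ∑ b ∈ Icc ((r : ℤ) + 1) (2 * r), max ((b - a - r : ℤ) : ℝ) 0 *
            cdf (P.map (ξ 0)) (min (U / c₀) (U / c₁)) ^ (b - a - 2).toNat := by
  rw [setIntegral_exceedance_eq_sum (measurable_mma hmeas) fun a b => max ((b - a - r : ℤ) : ℝ) 0,
    mul_sum]
  refine sum_congr rfl fun a ha => ?_
  rw [mul_sum]
  refine sum_congr rfl fun b hb => ?_
  rcases le_or_gt (b - a - r) 0 with h | h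
  · rw [max_eq_right (by exact_mod_cast h)]
    ring
  · rw [measureReal_gapEvent_mma hmeas hindep hident hc₀ hc₁ (by simp only [mem_Icc] at ha; omega)]
    ring

end MMA

theorem stmt_6_general
    {Ω : Type*} [MeasurableSpace Ω] (P : Measure Ω) [IsProbabilityMeasure P]
    (ξ : ℤ → Ω → ℝ) (hmeas : ∀ j, Measurable (ξ j))
    (hindep : iIndepFun ξ P)
    (hident : ∀ j, Measure.map (ξ j) P = Measure.map (ξ 0) P)
    (hpos : ∀ x : ℝ, 0 < P {ω | ξ 0 ω > x})
    (α : ℝ)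
    (hRV : ∀ t : ℝ, 0 < t →
      Tendsto (fun x : ℝ => (P {ω | ξ 0 ω > t * x}).toReal / (P {ω | ξ 0 ω > x}).toReal)
        atTop (nhds (t ^ (-α))))
    (c0 c1 : ℝ) (hc0 : 0 < c0) (hc1 : 0 < c1)
    (X : ℤ → Ω → ℝ) (hX : ∀ j ω, X j ω = max (c0 * ξ j ω) (c1 * ξ (j + 1) ω))
    (u : ℕ → ℝ) (hu : Tendsto u atTop atTop)
    (w : ℕ → ℝ) (hw : ∀ n, w n = (P {ω | X 0 ω > u n}).toReal)
    (r : ℕ → ℕ)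
    (hr : Tendsto (fun n => (r n : ℝ)) atTop atTop)
    (hrw : Tendsto (fun n => (r n : ℝ) * w n) atTop (nhds 0))
    (A : ℕ → ℤ → Set Ω)
    (hA : ∀ n (j : ℤ), A n j =
      {ω | ∃ i : ℤ, (j - 1) * (r n : ℤ) + 1 ≤ i ∧ i ≤ j * (r n : ℤ) ∧ X i ω > u n})
    (tfirst tlast : ℕ → ℤ → Ω → ℤ)
    (htfirst : ∀ n (j : ℤ) ω, tfirst n j ω =
      sInf {i : ℤ | (j - 1) * (r n : ℤ) + 1 ≤ i ∧ i ≤ j * (r n : ℤ) ∧ X i ω > u n})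
    (htlast : ∀ n (j : ℤ) ω, tlast n j ω =
      sSup {i : ℤ | (j - 1) * (r n : ℤ) + 1 ≤ i ∧ i ≤ j * (r n : ℤ) ∧ X i ω > u n})
    (θ : ℝ) (hθ : θ = (max c0 c1) ^ α / (c0 ^ α + c1 ^ α)) :
    Tendsto (fun n => (1 / ((r n : ℝ) ^ 3 * w n ^ 2)) *
        ∫ ω in (A n 1 ∩ A n 2),
          max ((tfirst n 2 ω - tlast n 1 ω - (r n : ℤ) : ℤ) : ℝ) 0 ∂P)
      atTop (nhds (θ ^ 2 / 6)) := by
  obtain rfl : X = mma c0 c1 ξ := funext fun j => funext (hX j)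
  have := Measure.isProbabilityMeasure_map (μ := P) (hmeas 0).aemeasurable
  set F := cdf (P.map (ξ 0))
  have htail : ∀ x, (P {ω | ξ 0 ω > x}).toReal = 1 - F x := measureReal_gt_eq_one_sub_cdf (hmeas 0)
  have hF₁ : ∀ x, F x < 1 := fun x =>
    sub_pos.1 (htail x ▸ ENNReal.toReal_pos (hpos x).ne' (measure_ne_top _ _))
  have hw' : ∀ n, w n = 1 - F (u n / c0) * F (u n / c1) := fun n =>
    (hw n).trans (measureReal_mma_gt hmeas hindep hident hc0 hc1)
  have hint : ∀ n, ∫ ω in A n 1 ∩ A n 2, max ((tfirst n 2 ω - tlast n 1 ω - r n : ℤ) : ℝ) 0 ∂P =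
      F (u n / c0) * F (u n / c1) * (1 - F (min (u n / c0) (u n / c1))) ^ 2 *
        ∑ a ∈ Icc (1 : ℤ) (r n), ∑ b ∈ Icc ((r n : ℤ) + 1) (2 * r n),
          max ((b - a - r n : ℤ) : ℝ) 0 * F (min (u n / c0) (u n / c1)) ^ (b - a - 2).toNat :=
      fun n => by
    have h₁ : ((1 : ℤ) - 1) * r n + 1 = 1 := by ring
    have h₂ : ((2 : ℤ) - 1) * r n + 1 = r n + 1 := by ring
    simp only [hA, htfirst, htlast, h₁, h₂, one_mul]
    exact setIntegral_gap_mma hmeas hindep hident hc0 hc1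
  have hlim := tendsto_normalized_gap_sum (F := F)
    (fun t ht => by simpa only [htail] using hRV t ht) (tendsto_cdf_atTop _) (cdf_nonneg _) hF₁
    hc0 hc1 hu hr (by simpa only [hw'] using hrw)
  rw [hθ]
  refine hlim.congr' ?_
  filter_upwards [hr.eventually_gt_atTop 0] with n hn
  have hw₀ : 1 - F (u n / c0) * F (u n / c1) ≠ 0 :=
    (sub_pos.2 ((mul_le_of_le_one_right (cdf_nonneg _ _) (cdf_le_one _ _)).trans_lt (hF₁ _))).ne'
  rw [hint, hw']
  field_simp

/-- Gap between the last exceedance of block 1 and the first exceedance of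
block 2, MMA(1):
`lim (1/(r_n^3 w_n^2)) E[1_{A₁∩A₂} max(t₂ᶠⁱʳˢᵗ − t₁ᶫᵃˢᵗ − r_n, 0)] = θ²/6`. -/
theorem stmt_6
    {Ω : Type*} [MeasurableSpace Ω] (P : Measure Ω) [IsProbabilityMeasure P]
    (ξ : ℤ → Ω → ℝ) (hmeas : ∀ j, Measurable (ξ j))
    (hindep : iIndepFun ξ P)
    (hident : ∀ j, Measure.map (ξ j) P = Measure.map (ξ 0) P)
    (hnonneg : ∀ j ω, 0 ≤ ξ j ω)
    (hpos : ∀ x : ℝ, 0 < P {ω | ξ 0 ω > x})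
    (α : ℝ) (hα : 0 < α)
    (hRV : ∀ t : ℝ, 0 < t →
      Tendsto (fun x : ℝ => (P {ω | ξ 0 ω > t * x}).toReal / (P {ω | ξ 0 ω > x}).toReal)
        atTop (nhds (t ^ (-α))))
    (c0 c1 : ℝ) (hc0 : 0 < c0) (hc1 : 0 < c1)
    (X : ℤ → Ω → ℝ) (hX : ∀ j ω, X j ω = max (c0 * ξ j ω) (c1 * ξ (j + 1) ω))
    (u : ℕ → ℝ) (hu : Tendsto u atTop atTop)
    (w : ℕ → ℝ) (hw : ∀ n, w n = (P {ω | X 0 ω > u n}).toReal)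
    (r : ℕ → ℕ) (hrpos : ∀ n, 0 < r n)
    (hr : Tendsto (fun n => (r n : ℝ)) atTop atTop)
    (hrw : Tendsto (fun n => (r n : ℝ) * w n) atTop (nhds 0))
    (A : ℕ → ℤ → Set Ω)
    (hA : ∀ n (j : ℤ), A n j =
      {ω | ∃ i : ℤ, (j - 1) * (r n : ℤ) + 1 ≤ i ∧ i ≤ j * (r n : ℤ) ∧ X i ω > u n})
    (tfirst tlast : ℕ → ℤ → Ω → ℤ)
    (htfirst : ∀ n (j : ℤ) ω, tfirst n j ω =
      sInf {i : ℤ | (j - 1) * (r n : ℤ) + 1 ≤ i ∧ i ≤ j * (r n : ℤ) ∧ X i ω > u n})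
    (htlast : ∀ n (j : ℤ) ω, tlast n j ω =
      sSup {i : ℤ | (j - 1) * (r n : ℤ) + 1 ≤ i ∧ i ≤ j * (r n : ℤ) ∧ X i ω > u n})
    (θ : ℝ) (hθ : θ = (max c0 c1) ^ α / (c0 ^ α + c1 ^ α)) :
    Tendsto (fun n => (1 / ((r n : ℝ) ^ 3 * w n ^ 2)) *
        ∫ ω in (A n 1 ∩ A n 2),
          max ((tfirst n 2 ω - tlast n 1 ω - (r n : ℤ) : ℤ) : ℝ) 0 ∂P)
      atTop (nhds (θ ^ 2 / 6)) :=
  stmt_6_general P ξ hmeas hindep hident hpos α hRV c0 c1 hc0 hc1 X hX u hu w hw r hr hrw A hA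
    tfirst tlast htfirst htlast θ hθ
end

section
/- (Mean of the internal cluster in the large blocks scenario, MMA(1).) If in addition r_n^2 w_n → ∞, then lim_{n→∞} (1/(r_n^3 w_n^2)) E[(t_1^{last} − t_1^{first}) · 1_{A_0^c ∩ A_1 ∩ A_2^c}] = θ^2/6, where θ = (max(c_0,c_1))^α / (c_0^α + c_1^α), A_0 is the exceedance event of the block {1−r_n, …, 0}, and t_1^{first}, t_1^{last} are the first and last exceedance times in block I_1. -/
/-!
On `A₀ᶜ ∩ A₁ ∩ A₂ᶜ ∩ {t₁ᶠⁱʳˢᵗ = i, t₁ˡᵃˢᵗ = j}` the process stays below `u` on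
`[1 - r, i - 1] ∪ [j + 1, 2r]` and exceeds it at `i` and `j`. Since `X k ≤ v` iff
`ξ k ≤ v / c₀` and `ξ (k + 1) ≤ v / c₁`, the probability of no exceedance on a finite index set
factorises over the `ξ`'s, and for `j ≥ i + 2` inclusion–exclusion at `i` and `j` gives exactly
`(F₀F₁)² (1 - Fₘ)² Fₘ ^ (3r - 3 - (j - i))`, where `F₀ = F (u / c₀)`, `F₁ = F (u / c₁)` and
`Fₘ = min F₀ F₁`. Summing `j - i` over `1 ≤ i ≤ j ≤ r` gives `(r³ - r) / 6`, while the adjacent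
pairs `j = i + 1` contribute at most `r w`. As `r w → 0`, `Fₘ ^ (3r) → 1`, regular variation gives
`(1 - Fₘ) / w → θ`, and `r² w → ∞` makes the adjacent pairs negligible after dividing by `r³ w²`.
-/

open MeasureTheory Filter ProbabilityTheory Finset Topology

noncomputable def orderedPairs (R : ℕ) : Finset (ℤ × ℤ) :=
  (Icc 1 (R : ℤ) ×ˢ Icc 1 (R : ℤ)).filter fun x => x.1 ≤ x.2

lemma sum_Icc_sub (m : ℕ) : ∑ i ∈ Icc (1 : ℤ) m, ((m : ℝ) - i) = m * (m - 1) / 2 := by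
  induction m with
  | zero => simp
  | succ m ih =>
    have hIcc : Icc (1 : ℤ) ((m : ℤ) + 1) = insert ((m : ℤ) + 1) (Icc 1 (m : ℤ)) := by
      ext k; simp only [mem_Icc, mem_insert]; omega
    push_cast
    rw [hIcc, sum_insert (by simp)]
    simp only [add_sub_right_comm _ (1 : ℝ), sum_add_distrib, ih, sum_const, Int.card_Icc]
    push_cast
    simp only [sub_add_cancel_left, neg_add_cancel, add_sub_cancel_right, Int.toNat_natCast,
      nsmul_eq_mul, mul_one, zero_add, sub_add_cancel]
    ring

lemma sum_orderedPairs_sub (R : ℕ) :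
    ∑ x ∈ orderedPairs R, ((x.2 - x.1 : ℤ) : ℝ) = ((R : ℝ) ^ 3 - R) / 6 := by
  induction R with
  | zero => simp [orderedPairs]
  | succ R ih =>
    have hsplit : orderedPairs (R + 1) =
        orderedPairs R ∪ Icc 1 ((R : ℤ) + 1) ×ˢ {(R : ℤ) + 1} := by
      ext ⟨i, j⟩; simp only [orderedPairs, mem_union, mem_filter, mem_product, mem_Icc,
        mem_singleton]; push_cast; omega
    have hdisj : Disjoint (orderedPairs R) (Icc 1 ((R : ℤ) + 1) ×ˢ {(R : ℤ) + 1}) := by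
      simp only [orderedPairs, disjoint_left, mem_filter, mem_product, mem_Icc, mem_singleton]
      omega
    rw [hsplit, sum_union hdisj, ih, sum_product, sum_congr rfl fun i _ => sum_singleton _ _]
    have := sum_Icc_sub (R + 1)
    push_cast at this ⊢
    rw [this]
    ring

lemma sum_orderedPairs_adjacent_le (R : ℕ) :
    ∑ x ∈ orderedPairs R, (if x.2 = x.1 + 1 then (1 : ℝ) else 0) ≤ R := by
  have hinj : #((orderedPairs R).filter fun x => x.2 = x.1 + 1) ≤ #(Icc (1 : ℤ) R) := by
    refine card_le_card_of_injOn Prod.fst (fun x hx => ?_) fun x hx y hy hxy => ?_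
    · simp only [orderedPairs, coe_filter, mem_filter, mem_product, Set.mem_ofPred_eq] at hx
      exact hx.1.1.1
    · simp only [orderedPairs, coe_filter, mem_filter, mem_product, Set.mem_ofPred_eq] at hx hy
      exact Prod.ext hxy (by rw [hx.2, hy.2, hxy])
  rw [sum_boole]
  exact_mod_cast hinj.trans (by simp)

lemma sum_orderedPairs_mul_bounds (R : ℕ) {g : ℤ × ℤ → ℝ} {L U w : ℝ} (hL : 0 ≤ L) (hU : 0 ≤ U)
    (hw : 0 ≤ w) (hg : ∀ x ∈ orderedPairs R, 0 ≤ g x ∧ g x ≤ w)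
    (hfar : ∀ x ∈ orderedPairs R, x.1 + 2 ≤ x.2 → L ≤ g x ∧ g x ≤ U) :
    L * (((R : ℝ) ^ 3 - 7 * R) / 6) ≤ ∑ x ∈ orderedPairs R, ((x.2 - x.1 : ℤ) : ℝ) * g x ∧
      ∑ x ∈ orderedPairs R, ((x.2 - x.1 : ℤ) : ℝ) * g x ≤ U * (((R : ℝ) ^ 3 - R) / 6) + R * w := by
  set adj : ℤ × ℤ → ℝ := fun x => if x.2 = x.1 + 1 then 1 else 0
  have hcases : ∀ x ∈ orderedPairs R, x.2 = x.1 ∨ x.2 = x.1 + 1 ∨ x.1 + 2 ≤ x.2 := by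
    intro x hx
    simp only [orderedPairs, mem_filter] at hx
    omega
  have hlower : ∀ x ∈ orderedPairs R, L * (((x.2 - x.1 : ℤ) : ℝ) - adj x) ≤
      ((x.2 - x.1 : ℤ) : ℝ) * g x := by
    intro x hx
    rcases hcases x hx with h | h | h
    · simp [adj, h]
    · simp [adj, h, (hg x hx).1]
    · simp only [adj, if_neg (by omega : x.2 ≠ x.1 + 1), sub_zero]
      rw [mul_comm]
      exact mul_le_mul_of_nonneg_left (hfar x hx h).1 (Int.cast_nonneg (by omega))
  have hupper : ∀ x ∈ orderedPairs R, ((x.2 - x.1 : ℤ) : ℝ) * g x ≤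
      U * ((x.2 - x.1 : ℤ) : ℝ) + w * adj x := by
    intro x hx
    rcases hcases x hx with h | h | h
    · simp [adj, h]
    · simp only [h, add_sub_cancel_left, Int.cast_one, one_mul, mul_one, ↓reduceIte, adj]
      linarith [(hg x hx).2]
    · simp only [adj, if_neg (by omega : x.2 ≠ x.1 + 1), mul_zero, add_zero]
      rw [mul_comm]
      exact mul_le_mul_of_nonneg_right (hfar x hx h).2 (Int.cast_nonneg (by omega))
  have hadj := sum_orderedPairs_adjacent_le R
  have hsum := sum_orderedPairs_sub R
  constructor
  · calc L * (((R : ℝ) ^ 3 - 7 * R) / 6) ≤ L * (((R : ℝ) ^ 3 - R) / 6 - R) := by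
          apply mul_le_mul_of_nonneg_left _ hL; linarith
      _ ≤ L * ∑ x ∈ orderedPairs R, (((x.2 - x.1 : ℤ) : ℝ) - adj x) := by
          rw [sum_sub_distrib, hsum]; exact mul_le_mul_of_nonneg_left (by linarith) hL
      _ ≤ _ := by rw [mul_sum]; exact sum_le_sum hlower
  · calc _ ≤ ∑ x ∈ orderedPairs R, (U * ((x.2 - x.1 : ℤ) : ℝ) + w * adj x) := sum_le_sum hupper
      _ ≤ _ := by
          rw [sum_add_distrib, ← mul_sum, ← mul_sum, hsum]
          linarith [mul_le_mul_of_nonneg_left hadj hw]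

lemma sInf_eq_and_sSup_eq_iff {s : Set ℤ} (hne : s.Nonempty) (hbdd : BddBelow s)
    (hbdd' : BddAbove s) {i j : ℤ} :
    sInf s = i ∧ sSup s = j ↔ i ∈ s ∧ j ∈ s ∧ ∀ k ∈ s, i ≤ k ∧ k ≤ j := by
  constructor
  · rintro ⟨rfl, rfl⟩
    exact ⟨Int.csInf_mem hne hbdd, Int.csSup_mem hne hbdd',
      fun k hk => ⟨csInf_le hbdd hk, le_csSup hbdd' hk⟩⟩
  · rintro ⟨hi, hj, hs⟩
    exact ⟨IsLeast.csInf_eq ⟨hi, fun k hk => (hs k hk).1⟩,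
      IsGreatest.csSup_eq ⟨hj, fun k hk => (hs k hk).2⟩⟩

lemma quiet_and_first_last_eq_iff {E : ℤ → Prop} {R : ℕ} {x : ℤ × ℤ} :
    (((∀ k ∈ Icc (1 - (R : ℤ)) 0, ¬E k) ∧ ∃ k ∈ Icc 1 (R : ℤ), E k) ∧
        ∀ k ∈ Icc ((R : ℤ) + 1) (2 * R), ¬E k) ∧
        sInf {k | k ∈ Icc 1 (R : ℤ) ∧ E k} = x.1 ∧ sSup {k | k ∈ Icc 1 (R : ℤ) ∧ E k} = x.2 ↔
      x ∈ orderedPairs R ∧ (∀ k ∈ Icc (1 - (R : ℤ)) (x.1 - 1) ∪ Icc (x.2 + 1) (2 * R), ¬E k) ∧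
        E x.1 ∧ E x.2 := by
  have hbdd : BddBelow {k | k ∈ Icc 1 (R : ℤ) ∧ E k} := ⟨1, fun k hk => (mem_Icc.1 hk.1).1⟩
  have hbdd' : BddAbove {k | k ∈ Icc 1 (R : ℤ) ∧ E k} := ⟨R, fun k hk => (mem_Icc.1 hk.1).2⟩
  rw [orderedPairs, mem_filter, mem_product]
  constructor
  · rintro ⟨⟨⟨hbefore, k, hk⟩, hafter⟩, hfl⟩
    obtain ⟨⟨hi, hEi⟩, ⟨hj, hEj⟩, hbetween⟩ := (sInf_eq_and_sSup_eq_iff ⟨k, hk⟩ hbdd hbdd').1 hfl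
    refine ⟨⟨⟨hi, hj⟩, (hbetween _ ⟨hi, hEi⟩).2⟩, fun k hk hEk => ?_, hEi, hEj⟩
    simp only [mem_union, mem_Icc] at hk hbefore hafter hi hj
    by_cases hkR : k ∈ Icc 1 (R : ℤ)
    · have := hbetween k ⟨hkR, hEk⟩
      omega
    · rw [mem_Icc] at hkR
      rcases hk with hk | hk
      · exact hbefore k ⟨hk.1, by omega⟩ hEk
      · exact hafter k ⟨by omega, hk.2⟩ hEk
  · rintro ⟨⟨⟨hi, hj⟩, hij⟩, hquiet, hEi, hEj⟩
    have hout : ∀ k : ℤ, (1 - (R : ℤ) ≤ k ∧ k ≤ x.1 - 1) ∨ (x.2 + 1 ≤ k ∧ k ≤ 2 * R) → ¬E k :=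
      fun k hk => hquiet k (by simpa only [mem_union, mem_Icc] using hk)
    rw [mem_Icc] at hi hj
    refine ⟨⟨⟨fun k hk => hout k (.inl ⟨(mem_Icc.1 hk).1, by linarith [(mem_Icc.1 hk).2]⟩),
      x.1, mem_Icc.2 hi, hEi⟩, fun k hk => hout k (.inr ⟨by linarith [(mem_Icc.1 hk).1],
      (mem_Icc.1 hk).2⟩)⟩, (sInf_eq_and_sSup_eq_iff (s := {k | k ∈ Icc 1 (R : ℤ) ∧ E k})
        ⟨x.1, mem_Icc.2 hi, hEi⟩ hbdd hbdd').2
        ⟨⟨mem_Icc.2 hi, hEi⟩, ⟨mem_Icc.2 hj, hEj⟩, fun k hk => ?_⟩⟩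
    by_contra hcon
    exact hout k (by have := mem_Icc.1 hk.1; omega) hk.2

section Cluster

variable {Ω : Type*}

-- For `1 ≤ i ≤ j ≤ R` this is `A₀ᶜ ∩ A₁ ∩ A₂ᶜ ∩ {t₁ᶠⁱʳˢᵗ = i, t₁ˡᵃˢᵗ = j}` (blocks of length `R`).
def clusterEvent (X : ℤ → Ω → ℝ) (v : ℝ) (R : ℕ) (i j : ℤ) : Set Ω :=
  {ω | (∀ k ∈ Icc (1 - (R : ℤ)) (i - 1) ∪ Icc (j + 1) (2 * R), X k ω ≤ v) ∧ v < X i ω ∧ v < X j ω}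

lemma measurableSet_clusterEvent [MeasurableSpace Ω] {X : ℤ → Ω → ℝ}
    (hX : ∀ k, Measurable (X k)) (v : ℝ) (R : ℕ) (i j : ℤ) :
    MeasurableSet (clusterEvent X v R i j) := by
  simp only [clusterEvent, Set.ofPred_and, Set.ofPred_forall]
  exact (Finset.measurableSet_biInter _ fun k _ => measurableSet_le (hX k) measurable_const).inter
    ((measurableSet_lt measurable_const (hX i)).inter (measurableSet_lt measurable_const (hX j)))

variable {X : ℤ → Ω → ℝ} {v : ℝ} {R : ℕ} {A : ℤ → Set Ω} {tf tl : ℤ → Ω → ℤ}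

lemma mem_quiet_and_first_last_eq_iff
    (hA : ∀ j : ℤ, A j = {ω | ∃ i : ℤ, (j - 1) * (R : ℤ) + 1 ≤ i ∧ i ≤ j * (R : ℤ) ∧ X i ω > v})
    (htf : ∀ (j : ℤ) ω,
      tf j ω = sInf {i : ℤ | (j - 1) * (R : ℤ) + 1 ≤ i ∧ i ≤ j * (R : ℤ) ∧ X i ω > v})
    (htl : ∀ (j : ℤ) ω,
      tl j ω = sSup {i : ℤ | (j - 1) * (R : ℤ) + 1 ≤ i ∧ i ≤ j * (R : ℤ) ∧ X i ω > v})
    (ω : Ω) (x : ℤ × ℤ) :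
    ω ∈ (A 0)ᶜ ∩ A 1 ∩ (A 2)ᶜ ∧ (tf 1 ω, tl 1 ω) = x ↔
      x ∈ orderedPairs R ∧ ω ∈ clusterEvent X v R x.1 x.2 := by
  have hmemA : ∀ j : ℤ, ω ∈ A j ↔ ∃ k ∈ Icc ((j - 1) * (R : ℤ) + 1) (j * R), v < X k ω := by
    intro j
    simp only [hA, Set.mem_ofPred_eq, mem_Icc, and_assoc]
  have hI0 : Icc ((0 - 1) * (R : ℤ) + 1) (0 * R) = Icc (1 - (R : ℤ)) 0 := by congr 1 <;> ring
  have hI1 : Icc ((1 - 1) * (R : ℤ) + 1) (1 * R) = Icc 1 (R : ℤ) := by congr 1 <;> ring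
  have hI2 : Icc ((2 - 1) * (R : ℤ) + 1) (2 * R) = Icc ((R : ℤ) + 1) (2 * R) := by
    congr 1; ring
  have hT : (tf 1 ω, tl 1 ω) = (sInf {k | k ∈ Icc 1 (R : ℤ) ∧ v < X k ω},
      sSup {k | k ∈ Icc 1 (R : ℤ) ∧ v < X k ω}) := by
    simp only [htf, htl, mem_Icc]
    norm_num [and_assoc]
  simp only [Set.mem_inter_iff, Set.mem_compl_iff, hmemA, hI0, hI1, hI2, not_exists, not_and, hT,
    Prod.ext_iff, clusterEvent, Set.mem_ofPred_eq, ← not_lt]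
  exact quiet_and_first_last_eq_iff

lemma setIntegral_last_sub_first_eq_sum [MeasurableSpace Ω] (P : Measure Ω) [IsFiniteMeasure P]
    (hX : ∀ k, Measurable (X k))
    (hA : ∀ j : ℤ, A j = {ω | ∃ i : ℤ, (j - 1) * (R : ℤ) + 1 ≤ i ∧ i ≤ j * (R : ℤ) ∧ X i ω > v})
    (htf : ∀ (j : ℤ) ω,
      tf j ω = sInf {i : ℤ | (j - 1) * (R : ℤ) + 1 ≤ i ∧ i ≤ j * (R : ℤ) ∧ X i ω > v})
    (htl : ∀ (j : ℤ) ω,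
      tl j ω = sSup {i : ℤ | (j - 1) * (R : ℤ) + 1 ≤ i ∧ i ≤ j * (R : ℤ) ∧ X i ω > v}) :
    ∫ ω in (A 0)ᶜ ∩ A 1 ∩ (A 2)ᶜ, ((tl 1 ω - tf 1 ω : ℤ) : ℝ) ∂P =
      ∑ x ∈ orderedPairs R, ((x.2 - x.1 : ℤ) : ℝ) * P.real (clusterEvent X v R x.1 x.2) := by
  set B := (A 0)ᶜ ∩ A 1 ∩ (A 2)ᶜ
  set T : Ω → ℤ × ℤ := fun ω => (tf 1 ω, tl 1 ω)
  have hiff := mem_quiet_and_first_last_eq_iff hA htf htl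
  have hpiece : ∀ x ∈ orderedPairs R, B ∩ T ⁻¹' {x} = clusterEvent X v R x.1 x.2 := fun x hx => by
    ext ω
    exact (hiff ω x).trans (and_iff_right hx)
  have hcover : B = ⋃ x ∈ orderedPairs R, B ∩ T ⁻¹' {x} := by
    ext ω
    simp only [Set.mem_iUnion, Set.mem_inter_iff, Set.mem_preimage, Set.mem_singleton_iff,
      exists_prop]
    exact ⟨fun hω => ⟨T ω, ((hiff ω _).1 ⟨hω, rfl⟩).1, hω, rfl⟩, fun ⟨_, _, hω, _⟩ => hω⟩
  have hconst : ∀ x, Set.EqOn (fun ω => ((tl 1 ω - tf 1 ω : ℤ) : ℝ))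
      (fun _ => ((x.2 - x.1 : ℤ) : ℝ)) (B ∩ T ⁻¹' {x}) := fun x ω hω => by
    rw [← show T ω = x from hω.2]
  have hmeas : ∀ x ∈ orderedPairs R, MeasurableSet (B ∩ T ⁻¹' {x}) := fun x hx => by
    rw [hpiece x hx]; exact measurableSet_clusterEvent hX v R x.1 x.2
  rw [hcover, integral_biUnion_finset _ hmeas
    (fun x _ y _ hxy => Set.disjoint_left.2 fun ω h1 h2 => hxy (h1.2.symm.trans h2.2))
    fun x hx => (integrableOn_const (C := ((x.2 - x.1 : ℤ) : ℝ))).congr_fun (hconst x).symm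
      (hmeas x hx)]
  refine sum_congr rfl fun x hx => ?_
  rw [setIntegral_congr_fun (hmeas x hx) (hconst x), setIntegral_const, hpiece x hx, smul_eq_mul,
    mul_comm]

end Cluster

lemma measureReal_sdiff_sdiff {α : Type*} [MeasurableSpace α] (μ : Measure α) [IsFiniteMeasure μ]
    (M : Set α) {G₁ G₂ : Set α} (h₁ : MeasurableSet G₁) (h₂ : MeasurableSet G₂) :
    μ.real ((M \ G₁) \ G₂) =
      μ.real M - μ.real (M ∩ G₁) - μ.real (M ∩ G₂) + μ.real (M ∩ G₁ ∩ G₂) := by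
  have h := measureReal_inter_add_sdiff (μ := μ) (s := M \ G₁) h₂
  have h' := measureReal_inter_add_sdiff (μ := μ) (s := M ∩ G₂) h₁
  rw [← Set.inter_sdiff_right_comm] at h
  rw [Set.inter_right_comm] at h'
  linarith [measureReal_inter_add_sdiff (μ := μ) (s := M) h₁]

section IID

variable {Ω : Type*} [MeasurableSpace Ω] {P : Measure Ω} {ξ : ℤ → Ω → ℝ}

lemma measureReal_forall_mem_mem_eq_prod (hindep : iIndepFun ξ P) (hmeas : ∀ j, Measurable (ξ j))
    (hident : ∀ j, P.map (ξ j) = P.map (ξ 0)) (U : Finset ℤ) {B : ℤ → Set ℝ}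
    (hB : ∀ k ∈ U, MeasurableSet (B k)) :
    P.real {ω | ∀ k ∈ U, ξ k ω ∈ B k} = ∏ k ∈ U, (P.map (ξ 0)).real (B k) := by
  have hset : {ω | ∀ k ∈ U, ξ k ω ∈ B k} = ⋂ k ∈ U, ξ k ⁻¹' B k := by ext; simp
  rw [hset, measureReal_def, hindep.measure_inter_preimage_eq_mul U hB, ENNReal.toReal_prod]
  refine prod_congr rfl fun k hk => ?_
  rw [← hident k, map_measureReal_apply (hmeas k) (hB k hk)]
  rfl

variable {c0 c1 : ℝ} {X : ℤ → Ω → ℝ}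

lemma measurable_of_eq_max (hmeas : ∀ j, Measurable (ξ j))
    (hX : ∀ j ω, X j ω = max (c0 * ξ j ω) (c1 * ξ (j + 1) ω)) (k : ℤ) : Measurable (X k) := by
  simp only [funext (hX k)]
  exact ((hmeas k).const_mul c0).max ((hmeas (k + 1)).const_mul c1)

lemma cdf_map_eq_one_sub [IsProbabilityMeasure P] {ζ : Ω → ℝ} (hζ : Measurable ζ) (y : ℝ) :
    cdf (P.map ζ) y = 1 - P.real {ω | ζ ω > y} := by
  have := Measure.isProbabilityMeasure_map (μ := P) hζ.aemeasurable
  rw [cdf_eq_real, map_measureReal_apply hζ measurableSet_Iic,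
    ← probReal_compl_eq_one_sub (measurableSet_lt measurable_const hζ)]
  congr 1
  ext ω
  simp

-- `X k ≤ v` for `k ∈ S` forces `ξ k ≤ v / c0` for `k ∈ S` and `ξ k ≤ v / c1` for `k ∈ S + 1`;
-- the exponents count the indices carrying only the first, only the second, or both constraints.
lemma measureReal_forall_mem_le_eq [IsProbabilityMeasure P] (hindep : iIndepFun ξ P)
    (hmeas : ∀ j, Measurable (ξ j)) (hident : ∀ j, P.map (ξ j) = P.map (ξ 0)) (hc0 : 0 < c0)
    (hc1 : 0 < c1) (hX : ∀ j ω, X j ω = max (c0 * ξ j ω) (c1 * ξ (j + 1) ω)) (v : ℝ)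
    (S : Finset ℤ) :
    P.real {ω | ∀ k ∈ S, X k ω ≤ v} =
      cdf (P.map (ξ 0)) (v / c0) ^ #(S \ S.map (addRightEmbedding 1)) *
      cdf (P.map (ξ 0)) (v / c1) ^ #(S.map (addRightEmbedding 1) \ S) *
      cdf (P.map (ξ 0)) (min (v / c0) (v / c1)) ^ #(S ∩ S.map (addRightEmbedding 1)) := by
  have := Measure.isProbabilityMeasure_map (μ := P) (hmeas 0).aemeasurable
  set T := S.map (addRightEmbedding 1)
  have hT : ∀ k, k ∈ T ↔ k - 1 ∈ S := fun k => by
    simp only [T, Finset.mem_map, addRightEmbedding_apply]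
    exact ⟨fun ⟨j, hj, hjk⟩ => by rwa [← hjk, add_sub_cancel_right], fun h => ⟨k - 1, h, by ring⟩⟩
  set B : ℤ → Set ℝ := fun k => {x | (k ∈ S → x ≤ v / c0) ∧ (k ∈ T → x ≤ v / c1)}
  have hset : {ω | ∀ k ∈ S, X k ω ≤ v} = {ω | ∀ k ∈ S ∪ T, ξ k ω ∈ B k} := by
    ext ω
    simp only [Set.mem_ofPred_eq, hX, max_le_iff, ← le_div_iff₀' hc0, ← le_div_iff₀' hc1, B,
      mem_union, hT]
    refine ⟨fun h k _ => ⟨fun hk => (h k hk).1, fun hk => ?_⟩, fun h k hk => ⟨(h k (.inl hk)).1 hk,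
      ?_⟩⟩
    · simpa using (h (k - 1) hk).2
    · exact (h (k + 1) (.inr (by simpa using hk))).2 (by simpa using hk)
  have hcdf : ∀ k y, B k = Set.Iic y → (P.map (ξ 0)).real (B k) = cdf (P.map (ξ 0)) y :=
    fun k y hy => by rw [hy, cdf_eq_real]
  rw [hset, measureReal_forall_mem_mem_eq_prod hindep hmeas hident _ fun k _ => ?_,
    union_eq_sdiff_union_sdiff_union_inter,
    prod_union (disjoint_left.2 fun k => by
      simp only [mem_union, Finset.mem_sdiff, mem_inter, not_and]; tauto),
    prod_union disjoint_sdiff_sdiff]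
  · congr 1; congr 1
    all_goals refine prod_eq_pow_card fun k hk => hcdf k _ (Set.ext fun x => ?_)
    all_goals simp only [Finset.mem_sdiff, Finset.mem_inter] at hk
    all_goals simp [B, hk]
  · exact ((MeasurableSet.const _).imp measurableSet_Iic).inter
      ((MeasurableSet.const _).imp measurableSet_Iic)

lemma measureReal_forall_mem_Icc_union_Icc_le_eq [IsProbabilityMeasure P] (hindep : iIndepFun ξ P)
    (hmeas : ∀ j, Measurable (ξ j)) (hident : ∀ j, P.map (ξ j) = P.map (ξ 0)) (hc0 : 0 < c0)
    (hc1 : 0 < c1) (hX : ∀ j ω, X j ω = max (c0 * ξ j ω) (c1 * ξ (j + 1) ω)) (v : ℝ)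
    {s t s' t' : ℤ} (hst : s ≤ t) (hgap : t + 1 < s') (hst' : s' ≤ t') :
    P.real {ω | ∀ k ∈ Icc s t ∪ Icc s' t', X k ω ≤ v} =
      (cdf (P.map (ξ 0)) (v / c0) * cdf (P.map (ξ 0)) (v / c1)) ^ 2 *
      cdf (P.map (ξ 0)) (min (v / c0) (v / c1)) ^ (t - s + (t' - s')).toNat := by
  rw [measureReal_forall_mem_le_eq hindep hmeas hident hc0 hc1 hX, map_union,
    map_add_right_Icc, map_add_right_Icc]
  have hstart :
      (Icc s t ∪ Icc s' t') \ (Icc (s + 1) (t + 1) ∪ Icc (s' + 1) (t' + 1)) = {s, s'} := by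
    ext k; simp only [Finset.mem_sdiff, mem_union, mem_Icc, mem_insert, mem_singleton]; omega
  have hend : (Icc (s + 1) (t + 1) ∪ Icc (s' + 1) (t' + 1)) \ (Icc s t ∪ Icc s' t') =
      {t + 1, t' + 1} := by
    ext k; simp only [Finset.mem_sdiff, mem_union, mem_Icc, mem_insert, mem_singleton]; omega
  have hinner : (Icc s t ∪ Icc s' t') ∩ (Icc (s + 1) (t + 1) ∪ Icc (s' + 1) (t' + 1)) =
      Icc (s + 1) t ∪ Icc (s' + 1) t' := by
    ext k; simp only [Finset.mem_inter, mem_union, mem_Icc]; omega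
  rw [hstart, hend, hinner, card_pair (by omega), card_pair (by omega),
    card_union_of_disjoint (disjoint_left.2 fun k => by simp only [mem_Icc]; omega),
    Int.card_Icc, Int.card_Icc, show (t + 1 - (s + 1)).toNat + (t' + 1 - (s' + 1)).toNat =
      (t - s + (t' - s')).toNat by omega]
  ring

lemma measureReal_le_eq [IsProbabilityMeasure P] (hindep : iIndepFun ξ P)
    (hmeas : ∀ j, Measurable (ξ j)) (hident : ∀ j, P.map (ξ j) = P.map (ξ 0)) (hc0 : 0 < c0)
    (hc1 : 0 < c1) (hX : ∀ j ω, X j ω = max (c0 * ξ j ω) (c1 * ξ (j + 1) ω)) (v : ℝ) (k : ℤ) :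
    P.real {ω | X k ω ≤ v} = cdf (P.map (ξ 0)) (v / c0) * cdf (P.map (ξ 0)) (v / c1) := by
  simpa [sdiff_eq_self_of_disjoint] using
    measureReal_forall_mem_le_eq hindep hmeas hident hc0 hc1 hX v {k}

-- Inclusion–exclusion on the exceedances at `i` and `j` leaves four no-exceedance events, each on
-- two separated runs.
lemma measureReal_clusterEvent [IsProbabilityMeasure P] (hindep : iIndepFun ξ P)
    (hmeas : ∀ j, Measurable (ξ j)) (hident : ∀ j, P.map (ξ j) = P.map (ξ 0)) (hc0 : 0 < c0)
    (hc1 : 0 < c1) (hX : ∀ j ω, X j ω = max (c0 * ξ j ω) (c1 * ξ (j + 1) ω)) (v : ℝ) {R : ℕ}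
    {i j : ℤ} (hi : 1 ≤ i) (hij : i + 2 ≤ j) (hj : j ≤ R) :
    P.real (clusterEvent X v R i j) =
      (cdf (P.map (ξ 0)) (v / c0) * cdf (P.map (ξ 0)) (v / c1)) ^ 2 *
      (1 - cdf (P.map (ξ 0)) (min (v / c0) (v / c1))) ^ 2 *
      cdf (P.map (ξ 0)) (min (v / c0) (v / c1)) ^ (3 * (R : ℤ) - 3 - (j - i)).toNat := by
  set N : Finset ℤ → Set Ω := fun S => {ω | ∀ k ∈ S, X k ω ≤ v}
  have hG : ∀ k, MeasurableSet {ω | X k ω ≤ v} := fun k =>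
    measurableSet_le (measurable_of_eq_max hmeas hX k) measurable_const
  have hins : ∀ S k, N S ∩ {ω | X k ω ≤ v} = N (insert k S) := fun S k => by
    ext ω; simp only [N, Set.mem_inter_iff, Set.mem_ofPred_eq, forall_mem_insert, and_comm]
  have hC : clusterEvent X v R i j =
      (N (Icc (1 - (R : ℤ)) (i - 1) ∪ Icc (j + 1) (2 * R)) \ {ω | X i ω ≤ v}) \
        {ω | X j ω ≤ v} := by
    ext ω; simp only [clusterEvent, N, Set.mem_sdiff, Set.mem_ofPred_eq, not_le, and_assoc]
  have hIi : insert i (Icc (1 - (R : ℤ)) (i - 1) ∪ Icc (j + 1) (2 * R)) =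
      Icc (1 - (R : ℤ)) i ∪ Icc (j + 1) (2 * R) := by
    ext k; simp only [mem_insert, mem_union, mem_Icc]; omega
  have hIj : insert j (Icc (1 - (R : ℤ)) (i - 1) ∪ Icc (j + 1) (2 * R)) =
      Icc (1 - (R : ℤ)) (i - 1) ∪ Icc j (2 * R) := by
    ext k; simp only [mem_insert, mem_union, mem_Icc]; omega
  have hIij : insert j (Icc (1 - (R : ℤ)) i ∪ Icc (j + 1) (2 * R)) =
      Icc (1 - (R : ℤ)) i ∪ Icc j (2 * R) := by
    ext k; simp only [mem_insert, mem_union, mem_Icc]; omega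
  have hrun := fun {s t s' t' : ℤ} => measureReal_forall_mem_Icc_union_Icc_le_eq hindep hmeas
    hident hc0 hc1 hX v (s := s) (t := t) (s' := s') (t' := t')
  set m := (3 * (R : ℤ) - 3 - (j - i)).toNat
  rw [hC, measureReal_sdiff_sdiff _ _ (hG i) (hG j), hins, hins, hins, hIi, hIj, hIij,
    hrun (by omega) (by omega) (by omega), hrun (by omega) (by omega) (by omega),
    hrun (by omega) (by omega) (by omega), hrun (by omega) (by omega) (by omega),
    show (i - 1 - (1 - R) + (2 * R - (j + 1))).toNat = m by omega,
    show (i - (1 - R) + (2 * R - (j + 1))).toNat = m + 1 by omega,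
    show (i - 1 - (1 - R) + (2 * R - j)).toNat = m + 1 by omega,
    show (i - (1 - R) + (2 * R - j)).toNat = m + 2 by omega]
  ring

lemma measureReal_lt_eq [IsProbabilityMeasure P] (hindep : iIndepFun ξ P)
    (hmeas : ∀ j, Measurable (ξ j)) (hident : ∀ j, P.map (ξ j) = P.map (ξ 0)) (hc0 : 0 < c0)
    (hc1 : 0 < c1) (hX : ∀ j ω, X j ω = max (c0 * ξ j ω) (c1 * ξ (j + 1) ω)) (v : ℝ) (k : ℤ) :
    P.real {ω | v < X k ω} = 1 - cdf (P.map (ξ 0)) (v / c0) * cdf (P.map (ξ 0)) (v / c1) := by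
  rw [← measureReal_le_eq hindep hmeas hident hc0 hc1 hX v k, ← probReal_compl_eq_one_sub
    (measurableSet_le (measurable_of_eq_max hmeas hX k) measurable_const)]
  congr 1
  ext ω
  simp

lemma setIntegral_last_sub_first_bounds [IsProbabilityMeasure P] (hindep : iIndepFun ξ P)
    (hmeas : ∀ j, Measurable (ξ j)) (hident : ∀ j, P.map (ξ j) = P.map (ξ 0)) (hc0 : 0 < c0)
    (hc1 : 0 < c1) (hX : ∀ j ω, X j ω = max (c0 * ξ j ω) (c1 * ξ (j + 1) ω)) (v : ℝ) {R : ℕ}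
    {a b : ℝ} (ha : a = P.real {ω | ξ 0 ω > v / c0}) (hb : b = P.real {ω | ξ 0 ω > v / c1})
    (A : ℤ → Set Ω)
    (hA : ∀ j : ℤ, A j = {ω | ∃ i : ℤ, (j - 1) * (R : ℤ) + 1 ≤ i ∧ i ≤ j * (R : ℤ) ∧ X i ω > v})
    (tf tl : ℤ → Ω → ℤ)
    (htf : ∀ (j : ℤ) ω,
      tf j ω = sInf {i : ℤ | (j - 1) * (R : ℤ) + 1 ≤ i ∧ i ≤ j * (R : ℤ) ∧ X i ω > v})
    (htl : ∀ (j : ℤ) ω,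
      tl j ω = sSup {i : ℤ | (j - 1) * (R : ℤ) + 1 ≤ i ∧ i ≤ j * (R : ℤ) ∧ X i ω > v}) :
    ((1 - a) * (1 - b)) ^ 2 * max a b ^ 2 * (1 - max a b) ^ (3 * R) * (((R : ℝ) ^ 3 - 7 * R) / 6) ≤
        ∫ ω in (A 0)ᶜ ∩ A 1 ∩ (A 2)ᶜ, ((tl 1 ω - tf 1 ω : ℤ) : ℝ) ∂P ∧
      ∫ ω in (A 0)ᶜ ∩ A 1 ∩ (A 2)ᶜ, ((tl 1 ω - tf 1 ω : ℤ) : ℝ) ∂P ≤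
        ((1 - a) * (1 - b)) ^ 2 * max a b ^ 2 * (((R : ℝ) ^ 3 - R) / 6) + R * (a + b - a * b) := by
  have hF0 : cdf (P.map (ξ 0)) (v / c0) = 1 - a := by rw [ha, cdf_map_eq_one_sub (hmeas 0)]
  have hF1 : cdf (P.map (ξ 0)) (v / c1) = 1 - b := by rw [hb, cdf_map_eq_one_sub (hmeas 0)]
  have hFm : cdf (P.map (ξ 0)) (min (v / c0) (v / c1)) = 1 - max a b := by
    rw [(monotone_cdf _).map_min, hF0, hF1, min_sub_sub_left]
  have ha1 : a ≤ 1 := ha ▸ measureReal_le_one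
  have hb1 : b ≤ 1 := hb ▸ measureReal_le_one
  have ha0 : 0 ≤ a := ha ▸ measureReal_nonneg
  have hb0 : 0 ≤ b := hb ▸ measureReal_nonneg
  have hq0 : 0 ≤ 1 - max a b := sub_nonneg.2 (max_le ha1 hb1)
  have hq1 : 1 - max a b ≤ 1 := by linarith [le_max_left a b]
  rw [setIntegral_last_sub_first_eq_sum P (measurable_of_eq_max hmeas hX) hA htf htl]
  refine sum_orderedPairs_mul_bounds R (by positivity) (by positivity) (by nlinarith)
    (fun x _ => ⟨measureReal_nonneg, ?_⟩) fun x hx hfar => ?_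
  · calc P.real (clusterEvent X v R x.1 x.2) ≤ P.real {ω | v < X x.1 ω} :=
          measureReal_mono fun ω hω => hω.2.1
      _ = a + b - a * b := by rw [measureReal_lt_eq hindep hmeas hident hc0 hc1 hX, hF0, hF1]; ring
  · simp only [orderedPairs, mem_filter, mem_product, mem_Icc] at hx
    rw [measureReal_clusterEvent hindep hmeas hident hc0 hc1 hX v hx.1.1.1 hfar hx.1.2.2, hF0, hF1,
      hFm, sub_sub_cancel]
    constructor
    · exact mul_le_mul_of_nonneg_left (pow_le_pow_of_le_one hq0 hq1 (by omega)) (by positivity)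
    · exact mul_le_of_le_one_right (by positivity) (pow_le_one₀ hq0 hq1)

end IID

lemma tendsto_div_comp_div_of_regularVariation {G : ℝ → ℝ} {α c : ℝ}
    (hG : ∀ t : ℝ, 0 < t → Tendsto (fun x => G (t * x) / G x) atTop (𝓝 (t ^ (-α))))
    (hc : 0 < c) {u : ℕ → ℝ} (hu : Tendsto u atTop atTop) :
    Tendsto (fun n => G (u n / c) / G (u n)) atTop (𝓝 (c ^ α)) := by
  have h := (hG c⁻¹ (inv_pos.2 hc)).comp hu
  rw [Real.inv_rpow hc.le, Real.rpow_neg hc.le, inv_inv] at h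
  simpa only [Function.comp_def, inv_mul_eq_div] using h

lemma tendsto_max_div_add_sub_mul {a b t : ℕ → ℝ} {A B : ℝ} (ht : ∀ n, 0 < t n)
    (ha : Tendsto (fun n => a n / t n) atTop (𝓝 A)) (hb : Tendsto (fun n => b n / t n) atTop (𝓝 B))
    (hb0 : Tendsto b atTop (𝓝 0)) (hAB : A + B ≠ 0) :
    Tendsto (fun n => max (a n) (b n) / (a n + b n - a n * b n)) atTop
      (𝓝 (max A B / (A + B))) := by
  have h := (ha.max hb).div ((ha.add hb).sub (ha.mul hb0)) (by simpa using hAB)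
  rw [mul_zero, sub_zero] at h
  refine h.congr fun n => ?_
  have hden : a n / t n + b n / t n - a n / t n * b n = (a n + b n - a n * b n) / t n := by ring
  rw [Pi.div_apply, max_div_div_right (ht n).le, hden, div_div_div_cancel_right₀ (ht n).ne']

lemma tendsto_one_sub_pow_of_mul_tendsto_zero {p : ℕ → ℝ} {m : ℕ → ℕ} (hp0 : ∀ n, 0 ≤ p n)
    (hp1 : ∀ n, p n ≤ 1) (h : Tendsto (fun n => m n * p n) atTop (𝓝 0)) :
    Tendsto (fun n => (1 - p n) ^ m n) atTop (𝓝 1) := by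
  have hlow : Tendsto (fun n => 1 - m n * p n) atTop (𝓝 1) := by
    simpa using (tendsto_const_nhds (x := (1 : ℝ))).sub h
  refine tendsto_of_tendsto_of_tendsto_of_le_of_le hlow tendsto_const_nhds (fun n => ?_)
    fun n => pow_le_one₀ (by linarith [hp1 n]) (by linarith [hp0 n])
  simpa [sub_eq_add_neg] using one_add_mul_le_pow (a := -p n) (by linarith [hp1 n]) (m n)

lemma tendsto_of_cluster_bounds {r : ℕ → ℕ} {κ p w E : ℕ → ℝ} {θ : ℝ}
    (hr : Tendsto (fun n => (r n : ℝ)) atTop atTop) (hrpos : ∀ n, 0 < r n) (hw : ∀ n, 0 < w n)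
    (hlarge : Tendsto (fun n => (r n : ℝ) ^ 2 * w n) atTop atTop)
    (hκ : Tendsto κ atTop (𝓝 1)) (hθ : Tendsto (fun n => p n / w n) atTop (𝓝 θ))
    (hq : Tendsto (fun n => (1 - p n) ^ (3 * r n)) atTop (𝓝 1))
    (hlow : ∀ n, κ n ^ 2 * p n ^ 2 * (1 - p n) ^ (3 * r n) * (((r n : ℝ) ^ 3 - 7 * r n) / 6) ≤ E n)
    (hup : ∀ n, E n ≤ κ n ^ 2 * p n ^ 2 * (((r n : ℝ) ^ 3 - r n) / 6) + r n * w n) :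
    Tendsto (fun n => 1 / ((r n : ℝ) ^ 3 * w n ^ 2) * E n) atTop (𝓝 (θ ^ 2 / 6)) := by
  have hr2 : Tendsto (fun n => ((r n : ℝ)⁻¹) ^ 2) atTop (𝓝 0) := by
    simpa using hr.inv_tendsto_atTop.pow 2
  have hlim : Tendsto (fun n => κ n ^ 2 * (p n / w n) ^ 2) atTop (𝓝 (θ ^ 2)) := by
    simpa using (hκ.pow 2).mul (hθ.pow 2)
  have hlow' : Tendsto (fun n => κ n ^ 2 * (p n / w n) ^ 2 * (1 - p n) ^ (3 * r n) *
      (1 / 6 - 7 / 6 * ((r n : ℝ)⁻¹) ^ 2)) atTop (𝓝 (θ ^ 2 / 6)) := by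
    convert (hlim.mul hq).mul (tendsto_const_nhds.sub (hr2.const_mul (7 / 6))) using 2
    ring
  have hup' : Tendsto (fun n => κ n ^ 2 * (p n / w n) ^ 2 * (1 / 6 - 1 / 6 * ((r n : ℝ)⁻¹) ^ 2) +
      ((r n : ℝ) ^ 2 * w n)⁻¹) atTop (𝓝 (θ ^ 2 / 6)) := by
    convert (hlim.mul ((tendsto_const_nhds (x := (1 / 6 : ℝ))).sub (hr2.const_mul (1 / 6)))).add
      hlarge.inv_tendsto_atTop using 2
    · simp only [Pi.inv_apply]
    · ring
  refine tendsto_of_tendsto_of_tendsto_of_le_of_le hlow' hup' (fun n => ?_) fun n => ?_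
  all_goals
    have hr0 : (0 : ℝ) < r n := Nat.cast_pos.2 (hrpos n)
    have hc : 0 < 1 / ((r n : ℝ) ^ 3 * w n ^ 2) := by have := hw n; positivity
  · refine le_trans (le_of_eq ?_) (mul_le_mul_of_nonneg_left (hlow n) hc.le)
    field_simp
  · refine le_trans (mul_le_mul_of_nonneg_left (hup n) hc.le) (le_of_eq ?_)
    field_simp

lemma tendsto_cluster_mean {r : ℕ → ℕ} {a b t w E : ℕ → ℝ} {A B : ℝ}
    (hr : Tendsto (fun n => (r n : ℝ)) atTop atTop) (hrpos : ∀ n, 0 < r n)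
    (ha : ∀ n, 0 < a n ∧ a n ≤ 1) (hb : ∀ n, 0 ≤ b n ∧ b n ≤ 1) (ht : ∀ n, 0 < t n)
    (haA : Tendsto (fun n => a n / t n) atTop (𝓝 A))
    (hbB : Tendsto (fun n => b n / t n) atTop (𝓝 B)) (hAB : A + B ≠ 0)
    (hw : ∀ n, w n = a n + b n - a n * b n)
    (hrw : Tendsto (fun n => (r n : ℝ) * w n) atTop (𝓝 0))
    (hlarge : Tendsto (fun n => (r n : ℝ) ^ 2 * w n) atTop atTop)
    (hlow : ∀ n, ((1 - a n) * (1 - b n)) ^ 2 * max (a n) (b n) ^ 2 *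
      (1 - max (a n) (b n)) ^ (3 * r n) * (((r n : ℝ) ^ 3 - 7 * r n) / 6) ≤ E n)
    (hup : ∀ n, E n ≤ ((1 - a n) * (1 - b n)) ^ 2 * max (a n) (b n) ^ 2 *
      (((r n : ℝ) ^ 3 - r n) / 6) + r n * w n) :
    Tendsto (fun n => 1 / ((r n : ℝ) ^ 3 * w n ^ 2) * E n) atTop
      (𝓝 ((max A B / (A + B)) ^ 2 / 6)) := by
  have hmax_le : ∀ n, max (a n) (b n) ≤ w n := fun n => by
    rw [hw]; apply max_le <;> nlinarith [ha n, hb n]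
  have hmax0 : ∀ n, 0 ≤ max (a n) (b n) := fun n => (ha n).1.le.trans (le_max_left _ _)
  have hwpos : ∀ n, 0 < w n := fun n => (ha n).1.trans_le ((le_max_left _ _).trans (hmax_le n))
  have hr1 : ∀ n, (1 : ℝ) ≤ r n := fun n => Nat.one_le_cast.2 (hrpos n)
  have hw0 : Tendsto w atTop (𝓝 0) := tendsto_of_tendsto_of_tendsto_of_le_of_le tendsto_const_nhds
    hrw (fun n => (hwpos n).le) fun n => le_mul_of_one_le_left (hwpos n).le (hr1 n)
  have hsmall : ∀ {f : ℕ → ℝ}, (∀ n, 0 ≤ f n ∧ f n ≤ w n) → Tendsto f atTop (𝓝 0) := fun hf =>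
    tendsto_of_tendsto_of_tendsto_of_le_of_le tendsto_const_nhds hw0 (fun n => (hf n).1)
      fun n => (hf n).2
  have ha0 := hsmall fun n => ⟨(ha n).1.le, (le_max_left _ _).trans (hmax_le n)⟩
  have hb0 := hsmall fun n => ⟨(hb n).1, (le_max_right _ _).trans (hmax_le n)⟩
  refine tendsto_of_cluster_bounds hr hrpos hwpos hlarge ?_
    ((tendsto_max_div_add_sub_mul ht haA hbB hb0 hAB).congr fun n => by rw [hw]) ?_ hlow hup
  · simpa using ((tendsto_const_nhds (x := (1 : ℝ))).sub ha0).mul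
      ((tendsto_const_nhds (x := (1 : ℝ))).sub hb0)
  · refine tendsto_one_sub_pow_of_mul_tendsto_zero hmax0 (fun n => max_le (ha n).2 (hb n).2) ?_
    refine tendsto_of_tendsto_of_tendsto_of_le_of_le tendsto_const_nhds
      (by simpa using hrw.const_mul 3) (fun n => by have := hmax0 n; positivity) fun n => ?_
    push_cast
    rw [mul_assoc]
    gcongr
    exact hmax_le n

theorem stmt_7_general
    {Ω : Type*} [MeasurableSpace Ω] (P : Measure Ω) [IsProbabilityMeasure P]
    (ξ : ℤ → Ω → ℝ) (hmeas : ∀ j, Measurable (ξ j))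
    (hindep : iIndepFun ξ P)
    (hident : ∀ j, Measure.map (ξ j) P = Measure.map (ξ 0) P)
    (hpos : ∀ x : ℝ, 0 < P {ω | ξ 0 ω > x})
    (α : ℝ) (hα : 0 < α)
    (hRV : ∀ t : ℝ, 0 < t →
      Tendsto (fun x : ℝ => (P {ω | ξ 0 ω > t * x}).toReal / (P {ω | ξ 0 ω > x}).toReal)
        atTop (nhds (t ^ (-α))))
    (c0 c1 : ℝ) (hc0 : 0 < c0) (hc1 : 0 < c1)
    (X : ℤ → Ω → ℝ) (hX : ∀ j ω, X j ω = max (c0 * ξ j ω) (c1 * ξ (j + 1) ω))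
    (u : ℕ → ℝ) (hu : Tendsto u atTop atTop)
    (w : ℕ → ℝ) (hw : ∀ n, w n = (P {ω | X 0 ω > u n}).toReal)
    (r : ℕ → ℕ) (hrpos : ∀ n, 0 < r n)
    (hr : Tendsto (fun n => (r n : ℝ)) atTop atTop)
    (hrw : Tendsto (fun n => (r n : ℝ) * w n) atTop (nhds 0))
    (A : ℕ → ℤ → Set Ω)
    (hA : ∀ n (j : ℤ), A n j =
      {ω | ∃ i : ℤ, (j - 1) * (r n : ℤ) + 1 ≤ i ∧ i ≤ j * (r n : ℤ) ∧ X i ω > u n})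
    (tfirst tlast : ℕ → ℤ → Ω → ℤ)
    (htfirst : ∀ n (j : ℤ) ω, tfirst n j ω =
      sInf {i : ℤ | (j - 1) * (r n : ℤ) + 1 ≤ i ∧ i ≤ j * (r n : ℤ) ∧ X i ω > u n})
    (htlast : ∀ n (j : ℤ) ω, tlast n j ω =
      sSup {i : ℤ | (j - 1) * (r n : ℤ) + 1 ≤ i ∧ i ≤ j * (r n : ℤ) ∧ X i ω > u n})
    (θ : ℝ) (hθ : θ = (max c0 c1) ^ α / (c0 ^ α + c1 ^ α))
    (hlarge : Tendsto (fun n => (r n : ℝ) ^ 2 * w n) atTop atTop) :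
    Tendsto (fun n => (1 / ((r n : ℝ) ^ 3 * w n ^ 2)) *
        ∫ ω in ((A n 0)ᶜ ∩ A n 1 ∩ (A n 2)ᶜ),
          ((tlast n 1 ω - tfirst n 1 ω : ℤ) : ℝ) ∂P)
      atTop (nhds (θ ^ 2 / 6)) := by
  set G : ℝ → ℝ := fun x => P.real {ω | ξ 0 ω > x}
  have hG : ∀ x, 0 < G x ∧ G x ≤ 1 := fun x =>
    ⟨ENNReal.toReal_pos (hpos x).ne' (measure_ne_top _ _), measureReal_le_one⟩
  have hw' : ∀ n, w n = G (u n / c0) + G (u n / c1) - G (u n / c0) * G (u n / c1) := fun n => by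
    have h := measureReal_lt_eq hindep hmeas hident hc0 hc1 hX (u n) 0
    rw [cdf_map_eq_one_sub (hmeas 0), cdf_map_eq_one_sub (hmeas 0)] at h
    exact (hw n).trans (h.trans (by ring))
  have hbounds := fun n => setIntegral_last_sub_first_bounds hindep hmeas hident hc0 hc1 hX (u n)
    rfl rfl (A n) (hA n) (tfirst n) (tlast n) (htfirst n) (htlast n)
  rw [hθ, Real.rpow_max hc0.le hc1.le hα.le]
  exact tendsto_cluster_mean hr hrpos (fun n => hG _) (fun n => ⟨(hG _).1.le, (hG _).2⟩)
    (fun n => (hG (u n)).1) (tendsto_div_comp_div_of_regularVariation hRV hc0 hu)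
    (tendsto_div_comp_div_of_regularVariation hRV hc1 hu) (by positivity) hw' hrw hlarge
    (fun n => (hbounds n).1) fun n => (hw' n).symm ▸ (hbounds n).2

/-- Mean of the internal cluster in the large blocks scenario, MMA(1):
if `r_n^2 w_n → ∞`, then
`lim (1/(r_n^3 w_n^2)) E[(t₁ᶫᵃˢᵗ − t₁ᶠⁱʳˢᵗ) 1_{A₀ᶜ ∩ A₁ ∩ A₂ᶜ}] = θ²/6`. -/
theorem stmt_7
    {Ω : Type*} [MeasurableSpace Ω] (P : Measure Ω) [IsProbabilityMeasure P]
    (ξ : ℤ → Ω → ℝ) (hmeas : ∀ j, Measurable (ξ j))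
    (hindep : iIndepFun ξ P)
    (hident : ∀ j, Measure.map (ξ j) P = Measure.map (ξ 0) P)
    (hnonneg : ∀ j ω, 0 ≤ ξ j ω)
    (hpos : ∀ x : ℝ, 0 < P {ω | ξ 0 ω > x})
    (α : ℝ) (hα : 0 < α)
    (hRV : ∀ t : ℝ, 0 < t →
      Tendsto (fun x : ℝ => (P {ω | ξ 0 ω > t * x}).toReal / (P {ω | ξ 0 ω > x}).toReal)
        atTop (nhds (t ^ (-α))))
    (c0 c1 : ℝ) (hc0 : 0 < c0) (hc1 : 0 < c1)
    (X : ℤ → Ω → ℝ) (hX : ∀ j ω, X j ω = max (c0 * ξ j ω) (c1 * ξ (j + 1) ω))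
    (u : ℕ → ℝ) (hu : Tendsto u atTop atTop)
    (w : ℕ → ℝ) (hw : ∀ n, w n = (P {ω | X 0 ω > u n}).toReal)
    (r : ℕ → ℕ) (hrpos : ∀ n, 0 < r n)
    (hr : Tendsto (fun n => (r n : ℝ)) atTop atTop)
    (hrw : Tendsto (fun n => (r n : ℝ) * w n) atTop (nhds 0))
    (A : ℕ → ℤ → Set Ω)
    (hA : ∀ n (j : ℤ), A n j =
      {ω | ∃ i : ℤ, (j - 1) * (r n : ℤ) + 1 ≤ i ∧ i ≤ j * (r n : ℤ) ∧ X i ω > u n})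
    (tfirst tlast : ℕ → ℤ → Ω → ℤ)
    (htfirst : ∀ n (j : ℤ) ω, tfirst n j ω =
      sInf {i : ℤ | (j - 1) * (r n : ℤ) + 1 ≤ i ∧ i ≤ j * (r n : ℤ) ∧ X i ω > u n})
    (htlast : ∀ n (j : ℤ) ω, tlast n j ω =
      sSup {i : ℤ | (j - 1) * (r n : ℤ) + 1 ≤ i ∧ i ≤ j * (r n : ℤ) ∧ X i ω > u n})
    (θ : ℝ) (hθ : θ = (max c0 c1) ^ α / (c0 ^ α + c1 ^ α))
    (hlarge : Tendsto (fun n => (r n : ℝ) ^ 2 * w n) atTop atTop) :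
    Tendsto (fun n => (1 / ((r n : ℝ) ^ 3 * w n ^ 2)) *
        ∫ ω in ((A n 0)ᶜ ∩ A n 1 ∩ (A n 2)ᶜ),
          ((tlast n 1 ω - tfirst n 1 ω : ℤ) : ℝ) ∂P)
      atTop (nhds (θ ^ 2 / 6)) :=
  stmt_7_general P ξ hmeas hindep hident hpos α hα hRV c0 c1 hc0 hc1 X hX u hu w hw r hrpos hr hrw A
    hA tfirst tlast htfirst htlast θ hθ hlarge
end

section
/- (Last-jump/first-jump decomposition of the two-block exceedance probability.) Let X = (X_j)_{j∈ℤ} be a stationary ℝ^d-valued sequence, u > 0 and r a positive integer. Set A_1 = {max_{1 ≤ i ≤ r} ‖X_i‖ > u} and A_2 = {max_{r+1 ≤ i ≤ 2r} ‖X_i‖ > u}. Then P(A_1 ∩ A_2) = Σ_{i=1}^{2r−1} (min(i, 2r−i)) · P(‖X_0‖ > u, max_{1 ≤ t ≤ i−1} ‖X_t‖ ≤ u, ‖X_i‖ > u), where for i = 1 the middle maximum is over the empty set (so that condition is vacuous). -/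
open MeasureTheory

/-!
On `A₁ ∩ A₂` let `a` be the last exceedance time in `[1, r]` and `b` the first one in
`[r + 1, 2r]`. The events "exceedances at `a` and `b`, none strictly in between" are pairwise
disjoint and cover `A₁ ∩ A₂`. By stationarity each has the probability of the same event for
the pair `(0, b - a)`, and exactly `min i (2r - i)` of the pairs `(a, b)` have `b - a = i`.
-/

section ConsecutiveHits

variable {Ω : Type*}

def consecutiveHits (E : ℤ → Set Ω) (a b : ℤ) : Set Ω :=
  E a ∩ (⋂ t ∈ Set.Ioo a b, (E t)ᶜ) ∩ E b

theorem mem_consecutiveHits {E : ℤ → Set Ω} {a b : ℤ} {ω : Ω} :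
    ω ∈ consecutiveHits E a b ↔ ω ∈ E a ∧ (∀ t, a < t → t < b → ω ∉ E t) ∧ ω ∈ E b := by
  simp only [consecutiveHits, Set.mem_inter_iff, Set.mem_iInter, Set.mem_Ioo, Set.mem_compl_iff,
    and_imp, and_assoc]

theorem consecutiveHits_preimage {α : Type*} (f : α → Ω) (E : ℤ → Set Ω) (a b : ℤ) :
    consecutiveHits (fun t => f ⁻¹' E t) a b = f ⁻¹' consecutiveHits E a b := by
  simp only [consecutiveHits, Set.preimage_inter, Set.preimage_iInter, Set.preimage_compl]

theorem consecutiveHits_eq_shift (E : ℤ → Set Ω) (a b : ℤ) :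
    consecutiveHits E a b = consecutiveHits (fun t => E (t + a)) 0 (b - a) := by
  ext ω
  simp only [mem_consecutiveHits, zero_add, sub_add_cancel]
  refine and_congr_right fun _ => and_congr_left fun _ =>
    ⟨fun h t ht₀ ht => h (t + a) (by omega) (by omega), fun h t ht₀ ht => ?_⟩
  simpa using h (t - a) (by omega) (by omega)

theorem MeasurableSet.consecutiveHits [MeasurableSpace Ω] {E : ℤ → Set Ω}
    (hE : ∀ t, MeasurableSet (E t)) (a b : ℤ) : MeasurableSet (consecutiveHits E a b) :=
  ((hE a).inter (.biInter (Set.to_countable _) fun t _ => (hE t).compl)).inter (hE b)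

theorem exists_last_mem_of_exists {E : ℤ → Set Ω} {m n : ℤ} {ω : Ω}
    (h : ∃ a, m ≤ a ∧ a ≤ n ∧ ω ∈ E a) :
    ∃ a, m ≤ a ∧ a ≤ n ∧ ω ∈ E a ∧ ∀ t, a < t → t ≤ n → ω ∉ E t := by
  obtain ⟨a, ⟨hma, han, ha⟩, hmax⟩ := Int.exists_greatest_of_bdd ⟨n, fun _ hz => hz.2.1⟩ h
  exact ⟨a, hma, han, ha, fun t hat htn ht => by
    linarith [hmax t ⟨by omega, htn, ht⟩]⟩

theorem exists_first_mem_of_exists {E : ℤ → Set Ω} {m n : ℤ} {ω : Ω}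
    (h : ∃ b, m ≤ b ∧ b ≤ n ∧ ω ∈ E b) :
    ∃ b, m ≤ b ∧ b ≤ n ∧ ω ∈ E b ∧ ∀ t, m ≤ t → t < b → ω ∉ E t := by
  obtain ⟨b, ⟨hmb, hbn, hb⟩, hmin⟩ := Int.exists_least_of_bdd ⟨m, fun _ hz => hz.1⟩ h
  exact ⟨b, hmb, hbn, hb, fun t hmt htb ht => by
    linarith [hmin t ⟨hmt, by omega, ht⟩]⟩

theorem inter_exists_mem_eq_biUnion_consecutiveHits (E : ℤ → Set Ω) (m n p : ℤ) :
    {ω | ∃ a, m ≤ a ∧ a ≤ n ∧ ω ∈ E a} ∩ {ω | ∃ b, n + 1 ≤ b ∧ b ≤ p ∧ ω ∈ E b} =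
      ⋃ q ∈ Finset.Icc m n ×ˢ Finset.Icc (n + 1) p, consecutiveHits E q.1 q.2 := by
  ext ω
  simp only [Set.mem_inter_iff, Set.mem_ofPred_eq, Set.mem_iUnion, Finset.mem_product,
    Finset.mem_Icc, exists_prop, Prod.exists, mem_consecutiveHits]
  constructor
  · rintro ⟨h₁, h₂⟩
    obtain ⟨a, hma, han, ha, ha_last⟩ := exists_last_mem_of_exists h₁
    obtain ⟨b, hnb, hbp, hb, hb_first⟩ := exists_first_mem_of_exists h₂
    refine ⟨a, b, ⟨⟨hma, han⟩, hnb, hbp⟩, ha, fun t hat htb => ?_, hb⟩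
    rcases le_or_gt t n with htn | hnt
    · exact ha_last t hat htn
    · exact hb_first t hnt htb
  · rintro ⟨a, b, ⟨⟨hma, han⟩, hnb, hbp⟩, ha, -, hb⟩
    exact ⟨⟨a, hma, han, ha⟩, b, hnb, hbp, hb⟩

theorem eq_of_mem_consecutiveHits {E : ℤ → Set Ω} {n a b a' b' : ℤ} {ω : Ω}
    (ha : a ≤ n) (ha' : a' ≤ n) (hb : n < b) (hb' : n < b')
    (h : ω ∈ consecutiveHits E a b) (h' : ω ∈ consecutiveHits E a' b') : a = a' ∧ b = b' := by
  rw [mem_consecutiveHits] at h h'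
  obtain ⟨hEa, hgap, hEb⟩ := h
  obtain ⟨hEa', hgap', hEb'⟩ := h'
  refine ⟨le_antisymm ?_ ?_, le_antisymm ?_ ?_⟩
  · exact not_lt.1 fun hlt => hgap' a hlt (by omega) hEa
  · exact not_lt.1 fun hlt => hgap a' hlt (by omega) hEa'
  · exact not_lt.1 fun hlt => hgap b' (by omega) hlt hEb'
  · exact not_lt.1 fun hlt => hgap' b (by omega) hlt hEb

theorem pairwiseDisjoint_consecutiveHits (E : ℤ → Set Ω) (n : ℤ) :
    {q : ℤ × ℤ | q.1 ≤ n ∧ n < q.2}.PairwiseDisjoint fun q => consecutiveHits E q.1 q.2 := by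
  rintro ⟨a, b⟩ ⟨ha, hb⟩ ⟨a', b'⟩ ⟨ha', hb'⟩ hne
  refine Set.disjoint_left.2 fun ω h h' => hne ?_
  obtain ⟨rfl, rfl⟩ := eq_of_mem_consecutiveHits ha ha' hb hb' h h'
  rfl

end ConsecutiveHits

theorem measure_consecutiveHits_eq_of_stationary {Ω β : Type*} [MeasurableSpace Ω]
    [MeasurableSpace β] (P : Measure Ω) (X : ℤ → Ω → β) (hmeas : ∀ j, Measurable (X j))
    (hstat : ∀ k : ℤ,
      Measure.map (fun ω (j : ℤ) => X (j + k) ω) P = Measure.map (fun ω (j : ℤ) => X j ω) P)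
    {B : Set β} (hB : MeasurableSet B) (a b : ℤ) :
    P (consecutiveHits (fun t => X t ⁻¹' B) a b)
      = P (consecutiveHits (fun t => X t ⁻¹' B) 0 (b - a)) := by
  set C := consecutiveHits (fun t => (fun f : ℤ → β => f t) ⁻¹' B) 0 (b - a)
  have hC : MeasurableSet C := .consecutiveHits (fun t => measurable_pi_apply t hB) _ _
  have hpath : ∀ k, Measurable fun ω (j : ℤ) => X (j + k) ω :=
    fun k => measurable_pi_lambda _ fun j => hmeas (j + k)
  calc P (consecutiveHits (fun t => X t ⁻¹' B) a b)
      = P ((fun ω (j : ℤ) => X (j + a) ω) ⁻¹' C) := by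
        rw [consecutiveHits_eq_shift, ← consecutiveHits_preimage]; rfl
    _ = P ((fun ω (j : ℤ) => X j ω) ⁻¹' C) := by
        rw [← Measure.map_apply (hpath a) hC, hstat,
          Measure.map_apply (measurable_pi_lambda _ hmeas) hC]
    _ = P (consecutiveHits (fun t => X t ⁻¹' B) 0 (b - a)) := by
        rw [← consecutiveHits_preimage]; rfl

open Finset in
theorem card_filter_toNat_sub_eq_min (r i : ℕ) :
    #{q ∈ Icc 1 (r : ℤ) ×ˢ Icc ((r : ℤ) + 1) (2 * r) | (q.2 - q.1).toNat = i}
      = min i (2 * r - i) := by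
  have himage :
      {q ∈ Icc 1 (r : ℤ) ×ˢ Icc ((r : ℤ) + 1) (2 * r) | (q.2 - q.1).toNat = i} =
        (Icc (max 1 ((r : ℤ) + 1 - i)) (min (r : ℤ) (2 * r - i))).image
          fun a => (a, a + (i : ℤ)) := by
    ext ⟨a, b⟩
    simp only [mem_filter, mem_product, mem_Icc, mem_image,
      Prod.mk.injEq, max_le_iff, le_min_iff]
    constructor
    · rintro ⟨⟨⟨ha₁, ha₂⟩, hb₁, hb₂⟩, hd⟩
      exact ⟨a, ⟨⟨by omega, by omega⟩, by omega, by omega⟩, rfl, by omega⟩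
    · rintro ⟨a, ⟨⟨ha₁, ha₂⟩, ha₃, ha₄⟩, rfl, rfl⟩
      omega
  rw [himage, card_image_of_injective _ fun x y h => (Prod.mk.inj h).1, Int.card_Icc]
  omega

open Finset in
theorem stmt_10_general
    {Ω : Type*} [MeasurableSpace Ω] (P : Measure Ω)
    (d : ℕ) (X : ℤ → Ω → (Fin d → ℝ)) (hmeas : ∀ j, Measurable (X j))
    (hstat : ∀ k : ℤ,
      Measure.map (fun ω (j : ℤ) => X (j + k) ω) P
        = Measure.map (fun ω (j : ℤ) => X j ω) P)
    (u : ℝ) (r : ℕ) :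
    P ({ω | ∃ i : ℤ, 1 ≤ i ∧ i ≤ (r : ℤ) ∧ ‖X i ω‖ > u} ∩
        {ω | ∃ i : ℤ, (r : ℤ) + 1 ≤ i ∧ i ≤ 2 * (r : ℤ) ∧ ‖X i ω‖ > u})
      = ∑ i ∈ Finset.Icc 1 (2 * r - 1),
          ((min i (2 * r - i) : ℕ) : ENNReal) *
            P {ω | ‖X 0 ω‖ > u ∧
                   (∀ t : ℤ, 1 ≤ t → t ≤ (i : ℤ) - 1 → ‖X t ω‖ ≤ u) ∧
                   ‖X (i : ℤ) ω‖ > u} := by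
  set E : ℤ → Set Ω := fun t => X t ⁻¹' {x | u < ‖x‖}
  set S := Icc 1 (r : ℤ) ×ˢ Icc ((r : ℤ) + 1) (2 * r)
  have hB : MeasurableSet {x : Fin d → ℝ | u < ‖x‖} :=
    measurableSet_lt measurable_const measurable_norm
  have hS : ∀ q ∈ S, q.1 ≤ r ∧ r < q.2 ∧ (q.2 - q.1).toNat ∈ Icc 1 (2 * r - 1) := by
    intro q hq
    simp only [S, mem_product, mem_Icc] at hq ⊢
    omega
  have hfirst : ∀ i : ℕ, consecutiveHits E 0 i = {ω | ‖X 0 ω‖ > u ∧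
      (∀ t : ℤ, 1 ≤ t → t ≤ (i : ℤ) - 1 → ‖X t ω‖ ≤ u) ∧ ‖X (i : ℤ) ω‖ > u} := by
    intro i
    ext ω
    simp only [mem_consecutiveHits, E, Set.mem_preimage, Set.mem_ofPred_eq, not_lt]
    exact and_congr_right fun _ => and_congr_left fun _ =>
      ⟨fun h t h₁ h₂ => h t (by omega) (by omega), fun h t h₁ h₂ => h t (by omega) (by omega)⟩
  calc P (_ ∩ _) = P (⋃ q ∈ S, consecutiveHits E q.1 q.2) := by
        rw [← inter_exists_mem_eq_biUnion_consecutiveHits]; rfl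
    _ = ∑ q ∈ S, P (consecutiveHits E q.1 q.2) :=
        measure_biUnion_finset ((pairwiseDisjoint_consecutiveHits E r).subset
          fun q hq => ⟨(hS q hq).1, (hS q hq).2.1⟩)
          fun q _ => .consecutiveHits (fun t => hmeas t hB) _ _
    _ = ∑ q ∈ S, P (consecutiveHits E 0 ((q.2 - q.1).toNat : ℕ)) := sum_congr rfl fun q hq => by
        rw [Int.toNat_of_nonneg (by linarith [hS q hq])]
        exact measure_consecutiveHits_eq_of_stationary P X hmeas hstat hB q.1 q.2
    _ = ∑ i ∈ Icc 1 (2 * r - 1),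
          #{q ∈ S | (q.2 - q.1).toNat = i} • P (consecutiveHits E 0 i) := by
        rw [← sum_fiberwise_of_maps_to' (fun q hq => (hS q hq).2.2)
          fun i : ℕ => P (consecutiveHits E 0 i)]
        simp only [sum_const]
    _ = _ := sum_congr rfl fun i _ => by
        rw [card_filter_toNat_sub_eq_min, nsmul_eq_mul, hfirst]

/-- Last-jump/first-jump decomposition of the two-block exceedance
probability for a stationary sequence:
`P(A₁ ∩ A₂) = Σ_{i=1}^{2r−1} min(i, 2r−i) · P(‖X₀‖ > u, max_{1≤t≤i−1} ‖X_t‖ ≤ u, ‖X_i‖ > u)`. -/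
theorem stmt_10
    {Ω : Type*} [MeasurableSpace Ω] (P : Measure Ω) [IsProbabilityMeasure P]
    (d : ℕ) (X : ℤ → Ω → (Fin d → ℝ)) (hmeas : ∀ j, Measurable (X j))
    (hstat : ∀ k : ℤ,
      Measure.map (fun ω (j : ℤ) => X (j + k) ω) P
        = Measure.map (fun ω (j : ℤ) => X j ω) P)
    (u : ℝ) (r : ℕ) (hr : 0 < r) :
    P ({ω | ∃ i : ℤ, 1 ≤ i ∧ i ≤ (r : ℤ) ∧ ‖X i ω‖ > u} ∩
        {ω | ∃ i : ℤ, (r : ℤ) + 1 ≤ i ∧ i ≤ 2 * (r : ℤ) ∧ ‖X i ω‖ > u})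
      = ∑ i ∈ Finset.Icc 1 (2 * r - 1),
          ((min i (2 * r - i) : ℕ) : ENNReal) *
            P {ω | ‖X 0 ω‖ > u ∧
                   (∀ t : ℤ, 1 ≤ t → t ≤ (i : ℤ) - 1 → ‖X t ω‖ ≤ u) ∧
                   ‖X (i : ℤ) ω‖ > u} :=
  stmt_10_general P d X hmeas hstat u r
end
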